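/- arXiv:1112.3403 — 7 statements merged into one kernel-verified Lean document; each statement's English description precedes it below -/
import Mathlib

section
/- In any unital associative ℂ-algebra A containing elements f_1,…,f_N and f_1†,…,f_N† satisfying the gl(1|1) canonical anticommutation relations, the elements e_j := (f_j+f_{j+1})(f_j†+f_{j+1}†), for 1 ≤ j ≤ N−1, satisfy the Temperley–Lieb relations at loop weight m = 0: e_j² = 0 for all j; e_j e_{j+1} e_j = e_j and e_{j+1} e_j e_{j+1} = e_{j+1} whenever both indices lie in {1,…,N−1}; and e_j e_k = e_k e_j whenever |j−k| ≥ 2. -/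
section TLHelpers

variable {A : Type*} [Ring A] [Algebra ℂ A]

private lemma my_half (x : A) (h : x + x = 0) : x = 0 := by
  have h2 : (2:ℂ) • x = 0 := by rw [two_smul]; exact h
  calc x = ((2:ℂ)⁻¹ * 2) • x := by norm_num
    _ = (2:ℂ)⁻¹ • ((2:ℂ) • x) := by rw [mul_smul]
    _ = 0 := by rw [h2, smul_zero]

omit [Algebra ℂ A] in
private lemma my_anti_add (x y u v : A) :
    (x+y)*(u+v) + (u+v)*(x+y)
      = (x*u+u*x)+((x*v+v*x)+((y*u+u*y)+(y*v+v*y))) := by noncomm_ring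

omit [Algebra ℂ A] in
private lemma my_sq (a b : A) (ha : a*a = 0) (h : a*b + b*a = 0) : (a*b)*(a*b) = 0 := by
  have hba : b*a = -(a*b) := eq_neg_of_add_eq_zero_right h
  calc (a*b)*(a*b) = a*(b*a)*b := by noncomm_ring
    _ = a*(-(a*b))*b := by rw [hba]
    _ = -((a*a)*(b*b)) := by noncomm_ring
    _ = 0 := by rw [ha]; simp

private lemma my_tl (a b a' b' : A) (c : ℂ)
    (h1 : a*a = 0) (h2 : b*b = 0) (h4 : b'*b' = 0)
    (h5 : a*b + b*a = 0) (h6 : a'*b' + b'*a' = 0)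
    (h7 : a*a' + a'*a = 0) (h8 : b*b' + b'*b = 0)
    (h9 : a*b' + b'*a = c • 1) (h10 : a'*b + b*a' = c • 1) :
    a*b*(a'*b')*(a*b) = (c*c) • (a*b) := by
  have r1 : ∀ x : A, a * (a * x) = 0 := fun x => by rw [← mul_assoc, h1, zero_mul]
  have r2 : ∀ x : A, b * (b * x) = 0 := fun x => by rw [← mul_assoc, h2, zero_mul]
  have r4 : ∀ x : A, b' * (b' * x) = 0 := fun x => by rw [← mul_assoc, h4, zero_mul]
  have e7 : a'*a = -(a*a') := eq_neg_of_add_eq_zero_right h7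
  have e5 : b*a = -(a*b) := eq_neg_of_add_eq_zero_right h5
  have e6 : b'*a' = -(a'*b') := eq_neg_of_add_eq_zero_right h6
  have e8 : b'*b = -(b*b') := eq_neg_of_add_eq_zero_right h8
  have e9 : b'*a = c•(1:A) - a*b' := eq_sub_of_add_eq' h9
  have e10 : b*a' = c•(1:A) - a'*b := eq_sub_of_add_eq' h10
  have s1 : ∀ x : A, a' * (a * x) = -(a * (a' * x)) := fun x => by
    rw [← mul_assoc, e7, neg_mul, mul_assoc]
  have s2 : ∀ x : A, b * (a * x) = -(a * (b * x)) := fun x => by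
    rw [← mul_assoc, e5, neg_mul, mul_assoc]
  have s3 : ∀ x : A, b' * (a' * x) = -(a' * (b' * x)) := fun x => by
    rw [← mul_assoc, e6, neg_mul, mul_assoc]
  have s4 : ∀ x : A, b' * (b * x) = -(b * (b' * x)) := fun x => by
    rw [← mul_assoc, e8, neg_mul, mul_assoc]
  have s5 : ∀ x : A, b' * (a * x) = c • x - a * (b' * x) := fun x => by
    rw [← mul_assoc, e9, sub_mul, smul_mul_assoc, one_mul, mul_assoc]
  have s6 : ∀ x : A, b * (a' * x) = c • x - a' * (b * x) := fun x => by
    rw [← mul_assoc, e10, sub_mul, smul_mul_assoc, one_mul, mul_assoc]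
  simp only [mul_assoc]
  simp [s6, s5, s2, s1, s3, s4, r1, r2, r4, e5, e6, e7, e8, e9, e10, h1, h2, h4,
    mul_sub, mul_add, mul_neg, mul_smul_comm, smul_smul, smul_sub, smul_add]

omit [Algebra ℂ A] in
private lemma my_comm (a b a' b' : A)
    (h7 : a*a' + a'*a = 0) (h8 : b*b' + b'*b = 0)
    (h9 : a*b' + b'*a = 0) (h10 : a'*b + b*a' = 0) :
    a*b*(a'*b') = a'*b'*(a*b) := by
  have e7 : a'*a = -(a*a') := eq_neg_of_add_eq_zero_right h7
  have e8 : b'*b = -(b*b') := eq_neg_of_add_eq_zero_right h8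
  have e9 : b'*a = -(a*b') := eq_neg_of_add_eq_zero_right h9
  have e10 : b*a' = -(a'*b) := eq_neg_of_add_eq_zero_right h10
  have s1 : ∀ x : A, a' * (a * x) = -(a * (a' * x)) := fun x => by
    rw [← mul_assoc, e7, neg_mul, mul_assoc]
  have s2 : ∀ x : A, b' * (b * x) = -(b * (b' * x)) := fun x => by
    rw [← mul_assoc, e8, neg_mul, mul_assoc]
  have s3 : ∀ x : A, b' * (a * x) = -(a * (b' * x)) := fun x => by
    rw [← mul_assoc, e9, neg_mul, mul_assoc]
  have s4 : ∀ x : A, b * (a' * x) = -(a' * (b * x)) := fun x => by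
    rw [← mul_assoc, e10, neg_mul, mul_assoc]
  simp only [mul_assoc]
  simp [s1, s2, s3, s4, e7, e8, e9, e10, mul_neg, neg_neg]

end TLHelpers

/-- **Temperley–Lieb relations at loop weight 0 from gl(1|1) fermions (open chain).**
In any unital associative ℂ-algebra containing fermions `f_1, …, f_N` and
`f_1†, …, f_N†` satisfying the gl(1|1) canonical anticommutation relations
(with alternating signs `(−1)^j`), the elements
`e_j := (f_j + f_{j+1})(f_j† + f_{j+1}†)`, `1 ≤ j ≤ N−1`, satisfy the
Temperley–Lieb relations at `m = 0`. -/
theorem gl11_open_temperley_lieb_relations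
    (N : ℕ) (hN : 3 ≤ N)
    (A : Type*) [Ring A] [Algebra ℂ A]
    (f fd : ℕ → A)
    (hff : ∀ j k, 1 ≤ j → j ≤ N → 1 ≤ k → k ≤ N →
      f j * f k + f k * f j = 0)
    (hfdfd : ∀ j k, 1 ≤ j → j ≤ N → 1 ≤ k → k ≤ N →
      fd j * fd k + fd k * fd j = 0)
    (hffd : ∀ j k, 1 ≤ j → j ≤ N → 1 ≤ k → k ≤ N →
      f j * fd k + fd k * f j = if j = k then ((-1 : ℂ) ^ j) • (1 : A) else 0)
    (e : ℕ → A)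
    (he : ∀ j, 1 ≤ j → j ≤ N - 1 →
      e j = (f j + f (j + 1)) * (fd j + fd (j + 1))) :
    -- e_j² = 0
    (∀ j, 1 ≤ j → j ≤ N - 1 → e j * e j = 0) ∧
    -- e_j e_{j+1} e_j = e_j and e_{j+1} e_j e_{j+1} = e_{j+1}
    (∀ j, 1 ≤ j → j + 1 ≤ N - 1 →
      e j * e (j + 1) * e j = e j ∧ e (j + 1) * e j * e (j + 1) = e (j + 1)) ∧
    -- far-apart generators commute
    (∀ j k, 1 ≤ j → j ≤ N - 1 → 1 ≤ k → k ≤ N - 1 → (j + 2 ≤ k ∨ k + 2 ≤ j) →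
      e j * e k = e k * e j) := by
  -- anticommutators of the combined fermions
  have hFF : ∀ j k, 1 ≤ j → j + 1 ≤ N → 1 ≤ k → k + 1 ≤ N →
      (f j + f (j+1)) * (f k + f (k+1)) + (f k + f (k+1)) * (f j + f (j+1)) = 0 := by
    intro j k hj hj' hk hk'
    rw [my_anti_add, hff j k (by omega) (by omega) (by omega) (by omega),
      hff j (k+1) (by omega) (by omega) (by omega) (by omega),
      hff (j+1) k (by omega) (by omega) (by omega) (by omega),
      hff (j+1) (k+1) (by omega) (by omega) (by omega) (by omega)]
    simp
  have hFdFd : ∀ j k, 1 ≤ j → j + 1 ≤ N → 1 ≤ k → k + 1 ≤ N →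
      (fd j + fd (j+1)) * (fd k + fd (k+1)) + (fd k + fd (k+1)) * (fd j + fd (j+1)) = 0 := by
    intro j k hj hj' hk hk'
    rw [my_anti_add, hfdfd j k (by omega) (by omega) (by omega) (by omega),
      hfdfd j (k+1) (by omega) (by omega) (by omega) (by omega),
      hfdfd (j+1) k (by omega) (by omega) (by omega) (by omega),
      hfdfd (j+1) (k+1) (by omega) (by omega) (by omega) (by omega)]
    simp
  have hFFd0 : ∀ j k, 1 ≤ j → j + 1 ≤ N → 1 ≤ k → k + 1 ≤ N →
      (j = k ∨ j + 2 ≤ k ∨ k + 2 ≤ j) →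
      (f j + f (j+1)) * (fd k + fd (k+1)) + (fd k + fd (k+1)) * (f j + f (j+1)) = 0 := by
    intro j k hj hj' hk hk' hcase
    rw [my_anti_add, hffd j k (by omega) (by omega) (by omega) (by omega),
      hffd j (k+1) (by omega) (by omega) (by omega) (by omega),
      hffd (j+1) k (by omega) (by omega) (by omega) (by omega),
      hffd (j+1) (k+1) (by omega) (by omega) (by omega) (by omega)]
    rcases hcase with rfl | h | h
    · rw [if_pos rfl, if_neg (by omega), if_neg (by omega), if_pos rfl, pow_succ]
      simp
    · rw [if_neg (by omega), if_neg (by omega), if_neg (by omega), if_neg (by omega)]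
      simp
    · rw [if_neg (by omega), if_neg (by omega), if_neg (by omega), if_neg (by omega)]
      simp
  have hFFdR : ∀ j, 1 ≤ j → j + 2 ≤ N →
      (f j + f (j+1)) * (fd (j+1) + fd (j+1+1)) + (fd (j+1) + fd (j+1+1)) * (f j + f (j+1))
        = ((-1 : ℂ) ^ (j+1)) • (1 : A) := by
    intro j hj hj'
    rw [my_anti_add, hffd j (j+1) (by omega) (by omega) (by omega) (by omega),
      hffd j (j+1+1) (by omega) (by omega) (by omega) (by omega),
      hffd (j+1) (j+1) (by omega) (by omega) (by omega) (by omega),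
      hffd (j+1) (j+1+1) (by omega) (by omega) (by omega) (by omega)]
    rw [if_neg (by omega), if_neg (by omega), if_pos rfl, if_neg (by omega)]
    simp
  have hFFdL : ∀ j, 1 ≤ j → j + 2 ≤ N →
      (f (j+1) + f (j+1+1)) * (fd j + fd (j+1)) + (fd j + fd (j+1)) * (f (j+1) + f (j+1+1))
        = ((-1 : ℂ) ^ (j+1)) • (1 : A) := by
    intro j hj hj'
    rw [my_anti_add, hffd (j+1) j (by omega) (by omega) (by omega) (by omega),
      hffd (j+1) (j+1) (by omega) (by omega) (by omega) (by omega),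
      hffd (j+1+1) j (by omega) (by omega) (by omega) (by omega),
      hffd (j+1+1) (j+1) (by omega) (by omega) (by omega) (by omega)]
    rw [if_neg (by omega), if_pos rfl, if_neg (by omega), if_neg (by omega)]
    simp
  have hFsq : ∀ j, 1 ≤ j → j + 1 ≤ N → (f j + f (j+1)) * (f j + f (j+1)) = 0 :=
    fun j hj hj' => my_half _ (hFF j j hj hj' hj hj')
  have hFdsq : ∀ j, 1 ≤ j → j + 1 ≤ N → (fd j + fd (j+1)) * (fd j + fd (j+1)) = 0 :=
    fun j hj hj' => my_half _ (hFdFd j j hj hj' hj hj')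
  have hc : ∀ j : ℕ, ((-1 : ℂ) ^ (j+1)) * ((-1 : ℂ) ^ (j+1)) = 1 := by
    intro j
    rw [← pow_add]
    exact Even.neg_one_pow ⟨j + 1, rfl⟩
  refine ⟨?_, ?_, ?_⟩
  · intro j hj hj'
    rw [he j hj hj']
    exact my_sq _ _ (hFsq j (by omega) (by omega))
      (hFFd0 j j (by omega) (by omega) (by omega) (by omega) (Or.inl rfl))
  · intro j hj hj'
    constructor
    · rw [he j (by omega) (by omega), he (j+1) (by omega) (by omega)]
      refine (my_tl (f j + f (j+1)) (fd j + fd (j+1)) (f (j+1) + f (j+1+1))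
        (fd (j+1) + fd (j+1+1)) ((-1 : ℂ) ^ (j+1))
        (hFsq j (by omega) (by omega)) (hFdsq j (by omega) (by omega))
        (hFdsq (j+1) (by omega) (by omega))
        (hFFd0 j j (by omega) (by omega) (by omega) (by omega) (Or.inl rfl))
        (hFFd0 (j+1) (j+1) (by omega) (by omega) (by omega) (by omega) (Or.inl rfl))
        (hFF j (j+1) (by omega) (by omega) (by omega) (by omega))
        (hFdFd j (j+1) (by omega) (by omega) (by omega) (by omega))
        (hFFdR j (by omega) (by omega)) (hFFdL j (by omega) (by omega))).trans ?_
      rw [hc j, one_smul]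
    · rw [he j (by omega) (by omega), he (j+1) (by omega) (by omega)]
      refine (my_tl (f (j+1) + f (j+1+1)) (fd (j+1) + fd (j+1+1)) (f j + f (j+1))
        (fd j + fd (j+1)) ((-1 : ℂ) ^ (j+1))
        (hFsq (j+1) (by omega) (by omega)) (hFdsq (j+1) (by omega) (by omega))
        (hFdsq j (by omega) (by omega))
        (hFFd0 (j+1) (j+1) (by omega) (by omega) (by omega) (by omega) (Or.inl rfl))
        (hFFd0 j j (by omega) (by omega) (by omega) (by omega) (Or.inl rfl))
        (hFF (j+1) j (by omega) (by omega) (by omega) (by omega))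
        (hFdFd (j+1) j (by omega) (by omega) (by omega) (by omega))
        (hFFdL j (by omega) (by omega)) (hFFdR j (by omega) (by omega))).trans ?_
      rw [hc j, one_smul]
  · intro j k hj hj' hk hk' hjk
    rw [he j (by omega) (by omega), he k (by omega) (by omega)]
    exact my_comm _ _ _ _
      (hFF j k (by omega) (by omega) (by omega) (by omega))
      (hFdFd j k (by omega) (by omega) (by omega) (by omega))
      (hFFd0 j k (by omega) (by omega) (by omega) (by omega) (by omega))
      (hFFd0 k j (by omega) (by omega) (by omega) (by omega) (by omega))
end

section
/- In any unital associative ℂ-algebra A containing elements f_1,…,f_N and f_1†,…,f_N† satisfying the gl(1|1) canonical anticommutation relations with N = 2L even, the elements e_j := (f_j+f_{j+1})(f_j†+f_{j+1}†) for 1 ≤ j ≤ N−1 together with e_N := (f_N+f_1)(f_N†+f_1†) satisfy the periodic Temperley–Lieb relations at loop weight m = 0 with indices read modulo N: e_j² = 0 for all 1 ≤ j ≤ N; e_j e_{j±1} e_j = e_j for all j (so in particular e_N e_1 e_N = e_N and e_1 e_N e_1 = e_1, e_{N−1} e_N e_{N−1} = e_{N−1}, e_N e_{N−1} e_N = e_N);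 and e_j e_k = e_k e_j whenever j ≢ k±1 (mod N) and j ≠ k. -/
lemma tl_sq {A : Type*} [Ring A] {F G : A} (hFF : F * F = 0)
    (hGF : G * F = -(F * G)) : (F * G) * (F * G) = 0 := by
  calc (F * G) * (F * G) = F * (G * F) * G := by noncomm_ring
  _ = F * (-(F * G)) * G := by rw [hGF]
  _ = -((F * F) * (G * G)) := by noncomm_ring
  _ = 0 := by rw [hFF]; simp

lemma tl_comm {A : Type*} [Ring A] {F G F' G' : A}
    (hF'F : F' * F = -(F * F')) (hG'G : G' * G = -(G * G'))
    (hGF' : G * F' = -(F' * G)) (hG'F : G' * F = -(F * G')) :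
    (F * G) * (F' * G') = (F' * G') * (F * G) := by
  have h1 : (F * G) * (F' * G') = -((F * F') * (G * G')) := by
    calc (F * G) * (F' * G') = F * (G * F') * G' := by noncomm_ring
    _ = F * (-(F' * G)) * G' := by rw [hGF']
    _ = -((F * F') * (G * G')) := by noncomm_ring
  have h2 : (F' * G') * (F * G) = -((F' * F) * (G' * G)) := by
    calc (F' * G') * (F * G) = F' * (G' * F) * G := by noncomm_ring
    _ = F' * (-(F * G')) * G := by rw [hG'F]
    _ = -((F' * F) * (G' * G)) := by noncomm_ring
  rw [h1, h2, hF'F, hG'G]; noncomm_ring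

lemma tl_core {A : Type*} [Ring A] {F G F' G' z z' : A}
    (hz : ∀ a : A, z * a = a * z) (hz' : ∀ a : A, z' * a = a * z')
    (hFF : F * F = 0) (hGG : G * G = 0)
    (hGF : G * F = -(F * G)) (hF'F : F' * F = -(F * F'))
    (hGF' : G * F' = z - F' * G) (hG'F : G' * F = z' - F * G') :
    (F * G) * (F' * G') * (F * G) = z * (z' * (F * G)) := by
  have step1 : (F * G) * (F' * G') * (F * G) = F * ((G * F') * ((G' * F) * G)) := by
    noncomm_ring
  have expand : F * ((z - F' * G) * ((z' - F * G') * G)) =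
      F * (z * (z' * G)) - F * (z * (F * (G' * G)))
      - F * (F' * (G * (z' * G))) + F * (F' * (G * (F * (G' * G)))) := by
    noncomm_ring
  have hzl : ∀ a b : A, a * (z * b) = z * (a * b) := fun a b => by
    rw [← mul_assoc, ← hz a, mul_assoc]
  have hz'l : ∀ a b : A, a * (z' * b) = z' * (a * b) := fun a b => by
    rw [← mul_assoc, ← hz' a, mul_assoc]
  have hGFa : ∀ x : A, G * (F * x) = -(F * (G * x)) := fun x => by
    rw [← mul_assoc, hGF, neg_mul, mul_assoc]
  have hF'Fa : ∀ x : A, F' * (F * x) = -(F * (F' * x)) := fun x => by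
    rw [← mul_assoc, hF'F, neg_mul, mul_assoc]
  have hFFa : ∀ x : A, F * (F * x) = 0 := fun x => by
    rw [← mul_assoc, hFF, zero_mul]
  have t1 : F * (z * (z' * G)) = z * (z' * (F * G)) := by rw [hzl, hz'l]
  have t2 : F * (z * (F * (G' * G))) = 0 := by rw [hzl, hFFa, mul_zero]
  have t3 : F * (F' * (G * (z' * G))) = 0 := by
    rw [hz'l G G, hz'l, hz'l, hGG, mul_zero, mul_zero, mul_zero]
  have t4 : F * (F' * (G * (F * (G' * G)))) = 0 := by
    rw [hGFa, mul_neg, hF'Fa, neg_neg, hFFa]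
  rw [step1, hGF', hG'F, expand, t1, t2, t3, t4]
  abel



/-- **Periodic Temperley–Lieb relations at loop weight 0 from gl(1|1) fermions.**
In any unital associative ℂ-algebra containing fermions `f_1, …, f_N` and
`f_1†, …, f_N†` (`N = 2L` even) satisfying the gl(1|1) canonical anticommutation
relations, the elements `e_j := (f_j + f_{j+1})(f_j† + f_{j+1}†)` for
`1 ≤ j ≤ N−1` together with `e_N := (f_N + f_1)(f_N† + f_1†)` satisfy the
periodic Temperley–Lieb relations at `m = 0`, indices read modulo `N`
(the cyclic successor of `j ∈ {1,…,N}` is `j % N + 1`). -/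
theorem gl11_periodic_temperley_lieb_relations
    (L : ℕ) (hL : 2 ≤ L) (N : ℕ) (hN : N = 2 * L)
    (A : Type*) [Ring A] [Algebra ℂ A]
    (f fd : ℕ → A)
    (hff : ∀ j k, 1 ≤ j → j ≤ N → 1 ≤ k → k ≤ N →
      f j * f k + f k * f j = 0)
    (hfdfd : ∀ j k, 1 ≤ j → j ≤ N → 1 ≤ k → k ≤ N →
      fd j * fd k + fd k * fd j = 0)
    (hffd : ∀ j k, 1 ≤ j → j ≤ N → 1 ≤ k → k ≤ N →
      f j * fd k + fd k * f j = if j = k then ((-1 : ℂ) ^ j) • (1 : A) else 0)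
    (e : ℕ → A)
    (he : ∀ j, 1 ≤ j → j ≤ N - 1 →
      e j = (f j + f (j + 1)) * (fd j + fd (j + 1)))
    (heN : e N = (f N + f 1) * (fd N + fd 1)) :
    -- e_j² = 0 for all 1 ≤ j ≤ N
    (∀ j, 1 ≤ j → j ≤ N → e j * e j = 0) ∧
    -- e_j e_{j±1} e_j = e_j for all j, cyclically
    (∀ j, 1 ≤ j → j ≤ N →
      e j * e (j % N + 1) * e j = e j ∧
      e (j % N + 1) * e j * e (j % N + 1) = e (j % N + 1)) ∧
    -- generators at non-adjacent (mod N) positions commute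
    (∀ j k, 1 ≤ j → j ≤ N → 1 ≤ k → k ≤ N → j ≠ k →
      j % N + 1 ≠ k → k % N + 1 ≠ j →
      e j * e k = e k * e j) := by
  have hN4 : 4 ≤ N := by omega
  set s : ℕ → ℕ := fun j => j % N + 1 with hs
  set F : ℕ → A := fun j => f j + f (s j) with hF
  set G : ℕ → A := fun j => fd j + fd (s j) with hG
  have hsdef : ∀ m, s m = m % N + 1 := fun m => rfl
  have hsr : ∀ j, 1 ≤ s j ∧ s j ≤ N := by
    intro j
    rw [hsdef]
    have : j % N < N := Nat.mod_lt _ (by omega)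
    omega
  have hs_cases : ∀ j, 1 ≤ j → j ≤ N → (j < N ∧ s j = j + 1) ∨ (j = N ∧ s j = 1) := by
    intro j h1 h2
    rcases eq_or_lt_of_le h2 with h | h
    · exact Or.inr ⟨h, by rw [hsdef, h, Nat.mod_self]⟩
    · exact Or.inl ⟨h, by rw [hsdef, Nat.mod_eq_of_lt h]⟩
  have he' : ∀ j, 1 ≤ j → j ≤ N → e j = F j * G j := by
    intro j h1 h2
    rcases eq_or_lt_of_le h2 with h | h
    · subst h
      have hsj : s j = 1 := by rw [hsdef, Nat.mod_self]
      rw [hF, hG]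
      simp only [hsj]
      exact heN
    · have hsj : s j = j + 1 := by rw [hsdef, Nat.mod_eq_of_lt h]
      rw [hF, hG]
      simp only [hsj]
      exact he j h1 (by omega)
  have hsign : ∀ j, 1 ≤ j → j ≤ N → ((-1 : ℂ) ^ j) + ((-1 : ℂ) ^ (s j)) = 0 := by
    intro j h1 h2
    rcases eq_or_lt_of_le h2 with h | h
    · subst h
      have hsj : s j = 1 := by rw [hsdef, Nat.mod_self]
      rw [hsj, hN, pow_mul]
      norm_num
    · have hsj : s j = j + 1 := by rw [hsdef, Nat.mod_eq_of_lt h]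
      rw [hsj, pow_succ]
      ring
  have hFFgen : ∀ j k, 1 ≤ j → j ≤ N → 1 ≤ k → k ≤ N →
      F j * F k + F k * F j = 0 := by
    intro j k hj1 hj2 hk1 hk2
    obtain ⟨hsj1, hsj2⟩ := hsr j
    obtain ⟨hsk1, hsk2⟩ := hsr k
    have expand : F j * F k + F k * F j =
        (f j * f k + f k * f j) + (f j * f (s k) + f (s k) * f j)
        + (f (s j) * f k + f k * f (s j)) + (f (s j) * f (s k) + f (s k) * f (s j)) := by
      rw [hF]; noncomm_ring
    rw [expand, hff j k hj1 hj2 hk1 hk2, hff j (s k) hj1 hj2 hsk1 hsk2,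
      hff (s j) k hsj1 hsj2 hk1 hk2, hff (s j) (s k) hsj1 hsj2 hsk1 hsk2]
    simp
  have hGGgen : ∀ j k, 1 ≤ j → j ≤ N → 1 ≤ k → k ≤ N →
      G j * G k + G k * G j = 0 := by
    intro j k hj1 hj2 hk1 hk2
    obtain ⟨hsj1, hsj2⟩ := hsr j
    obtain ⟨hsk1, hsk2⟩ := hsr k
    have expand : G j * G k + G k * G j =
        (fd j * fd k + fd k * fd j) + (fd j * fd (s k) + fd (s k) * fd j)
        + (fd (s j) * fd k + fd k * fd (s j)) + (fd (s j) * fd (s k) + fd (s k) * fd (s j)) := by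
      rw [hG]; noncomm_ring
    rw [expand, hfdfd j k hj1 hj2 hk1 hk2, hfdfd j (s k) hj1 hj2 hsk1 hsk2,
      hfdfd (s j) k hsj1 hsj2 hk1 hk2, hfdfd (s j) (s k) hsj1 hsj2 hsk1 hsk2]
    simp
  have hFGexp : ∀ j k, F j * G k + G k * F j =
      (f j * fd k + fd k * f j) + (f j * fd (s k) + fd (s k) * f j)
      + (f (s j) * fd k + fd k * f (s j)) + (f (s j) * fd (s k) + fd (s k) * f (s j)) := by
    intro j k; rw [hF, hG]; noncomm_ring
  have hFGself : ∀ j, 1 ≤ j → j ≤ N → F j * G j + G j * F j = 0 := by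
    intro j h1 h2
    obtain ⟨hsj1, hsj2⟩ := hsr j
    have hne : j ≠ s j := by have := hs_cases j h1 h2; omega
    rw [hFGexp j j, hffd j j h1 h2 h1 h2, hffd j (s j) h1 h2 hsj1 hsj2,
      hffd (s j) j hsj1 hsj2 h1 h2, hffd (s j) (s j) hsj1 hsj2 hsj1 hsj2,
      if_pos rfl, if_pos rfl, if_neg hne, if_neg (Ne.symm hne)]
    rw [add_zero, add_zero, ← add_smul, hsign j h1 h2, zero_smul]
  have hFGnext : ∀ j, 1 ≤ j → j ≤ N →
      F j * G (s j) + G (s j) * F j = ((-1 : ℂ) ^ (s j)) • (1 : A) := by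
    intro j h1 h2
    obtain ⟨hsj1, hsj2⟩ := hsr j
    obtain ⟨hssj1, hssj2⟩ := hsr (s j)
    have hc1 := hs_cases j h1 h2
    have hc2 := hs_cases (s j) hsj1 hsj2
    have hne1 : j ≠ s j := by omega
    have hne2 : j ≠ s (s j) := by omega
    have hne3 : s j ≠ s (s j) := by omega
    rw [hFGexp j (s j), hffd j (s j) h1 h2 hsj1 hsj2, hffd j (s (s j)) h1 h2 hssj1 hssj2,
      hffd (s j) (s j) hsj1 hsj2 hsj1 hsj2, hffd (s j) (s (s j)) hsj1 hsj2 hssj1 hssj2,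
      if_neg hne1, if_neg hne2, if_pos rfl, if_neg hne3]
    abel
  have hFGprev : ∀ j, 1 ≤ j → j ≤ N →
      F (s j) * G j + G j * F (s j) = ((-1 : ℂ) ^ (s j)) • (1 : A) := by
    intro j h1 h2
    obtain ⟨hsj1, hsj2⟩ := hsr j
    obtain ⟨hssj1, hssj2⟩ := hsr (s j)
    have hc1 := hs_cases j h1 h2
    have hc2 := hs_cases (s j) hsj1 hsj2
    have hne1 : s j ≠ j := by omega
    have hne2 : s (s j) ≠ j := by omega
    have hne3 : s (s j) ≠ s j := by omega
    rw [hFGexp (s j) j, hffd (s j) j hsj1 hsj2 h1 h2, hffd (s j) (s j) hsj1 hsj2 hsj1 hsj2,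
      hffd (s (s j)) j hssj1 hssj2 h1 h2, hffd (s (s j)) (s j) hssj1 hssj2 hsj1 hsj2,
      if_neg hne1, if_pos rfl, if_neg hne2, if_neg hne3]
    abel
  have hFGfar : ∀ j k, 1 ≤ j → j ≤ N → 1 ≤ k → k ≤ N → j ≠ k → s j ≠ k → s k ≠ j →
      F j * G k + G k * F j = 0 := by
    intro j k hj1 hj2 hk1 hk2 hjk hsjk hskj
    obtain ⟨hsj1, hsj2⟩ := hsr j
    obtain ⟨hsk1, hsk2⟩ := hsr k
    have hss : s j ≠ s k := by
      have hc1 := hs_cases j hj1 hj2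
      have hc2 := hs_cases k hk1 hk2
      omega
    rw [hFGexp j k, hffd j k hj1 hj2 hk1 hk2, hffd j (s k) hj1 hj2 hsk1 hsk2,
      hffd (s j) k hsj1 hsj2 hk1 hk2, hffd (s j) (s k) hsj1 hsj2 hsk1 hsk2,
      if_neg hjk, if_neg (Ne.symm hskj), if_neg hsjk, if_neg hss]
    simp
  have hFsq : ∀ j, 1 ≤ j → j ≤ N → F j * F j = 0 := by
    intro j h1 h2
    have h := hFFgen j j h1 h2 h1 h2
    have h2' : (2 : ℂ) • (F j * F j) = 0 := by rw [two_smul]; exact h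
    have := congrArg (fun a => (2⁻¹ : ℂ) • a) h2'
    simpa [smul_smul] using this
  have hGsq : ∀ j, 1 ≤ j → j ≤ N → G j * G j = 0 := by
    intro j h1 h2
    have h := hGGgen j j h1 h2 h1 h2
    have h2' : (2 : ℂ) • (G j * G j) = 0 := by rw [two_smul]; exact h
    have := congrArg (fun a => (2⁻¹ : ℂ) • a) h2'
    simpa [smul_smul] using this
  have hcen : ∀ (c : ℂ) (a : A), (c • (1 : A)) * a = a * (c • (1 : A)) := by
    intro c a
    rw [smul_mul_assoc, mul_smul_comm, one_mul, mul_one]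
  refine ⟨?_, ?_, ?_⟩
  · intro j h1 h2
    rw [he' j h1 h2]
    exact tl_sq (hFsq j h1 h2)
      (eq_neg_of_add_eq_zero_right (hFGself j h1 h2))
  · intro j h1 h2
    rw [← hsdef j]
    obtain ⟨hsj1, hsj2⟩ := hsr j
    have hej := he' j h1 h2
    have hesj := he' (s j) hsj1 hsj2
    have hzz : ∀ x : A, (((-1 : ℂ) ^ (s j)) • (1 : A)) * ((((-1 : ℂ) ^ (s j)) • (1 : A)) * x) = x := by
      intro x
      rw [smul_mul_assoc, smul_mul_assoc, one_mul, one_mul, smul_smul, ← pow_add,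
        Even.neg_one_pow ⟨s j, rfl⟩, one_smul]
    have hGF : G j * F j = -(F j * G j) :=
      eq_neg_of_add_eq_zero_right (hFGself j h1 h2)
    have hGF' : G (s j) * F (s j) = -(F (s j) * G (s j)) :=
      eq_neg_of_add_eq_zero_right (hFGself (s j) hsj1 hsj2)
    have hFF' : F (s j) * F j = -(F j * F (s j)) :=
      eq_neg_of_add_eq_zero_right (hFFgen j (s j) h1 h2 hsj1 hsj2)
    have hFF'' : F j * F (s j) = -(F (s j) * F j) :=
      eq_neg_of_add_eq_zero_right (hFFgen (s j) j hsj1 hsj2 h1 h2)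
    have hnext : G (s j) * F j = ((-1 : ℂ) ^ (s j)) • (1 : A) - F j * G (s j) :=
      eq_sub_of_add_eq' (hFGnext j h1 h2)
    have hprev : G j * F (s j) = ((-1 : ℂ) ^ (s j)) • (1 : A) - F (s j) * G j :=
      eq_sub_of_add_eq' (hFGprev j h1 h2)
    constructor
    · rw [hej, hesj]
      rw [tl_core (hcen _) (hcen _) (hFsq j h1 h2) (hGsq j h1 h2) hGF hFF' hprev hnext]
      exact hzz _
    · rw [hej, hesj]
      rw [tl_core (hcen _) (hcen _) (hFsq (s j) hsj1 hsj2) (hGsq (s j) hsj1 hsj2)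
        hGF' hFF'' hnext hprev]
      exact hzz _
  · intro j k hj1 hj2 hk1 hk2 hjk hsjk hskj
    rw [← hsdef j] at hsjk
    rw [← hsdef k] at hskj
    rw [he' j hj1 hj2, he' k hk1 hk2]
    exact tl_comm
      (eq_neg_of_add_eq_zero_right (hFFgen j k hj1 hj2 hk1 hk2))
      (eq_neg_of_add_eq_zero_right (hGGgen j k hj1 hj2 hk1 hk2))
      (eq_neg_of_add_eq_zero_right (hFGfar k j hk1 hk2 hj1 hj2 (Ne.symm hjk) hskj hsjk))
      (eq_neg_of_add_eq_zero_right (hFGfar j k hj1 hj2 hk1 hk2 hjk hsjk hskj))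
end

section
/- On the periodic gl(1|1) spin chain, the Hamiltonian is diagonalized in Fourier modes: as operators on H = (ℂ²)^{⊗N}, −Σ_{j=1}^{N} e_j = 2 Σ_{p∈P_N} (1 + sin p) θ_p† θ_{p+π}, where for p ∈ P_N, p+π denotes the unique element of P_N congruent to p+π modulo 2π. -/
/-!
Put `g_j = f_j + f_{j+1}`. The anticommutator `{g_j, g_j†}` is `(-1)^j + (-1)^{j+1} = 0`
(also across the boundary bond, because `N` is even), so `-e_j = g_j† g_j`.

Since `c_k = (-i)^k f_k`, the modes `θ_p†` and `θ_{p+π}` are, up to `N^{-1/2}`, the discrete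
Fourier transforms `Σ_k z^k f_k†` and `Σ_k z^{-k} f_k` at the phase `z = e^{i(p - π/2)}`, and
the quantisation `e^{iNp} = (-1)^L` of the momenta says exactly that these phases run over the
`N`-th roots of unity. Multiplying a transform at `z` by `1 + z⁻¹` turns `f` into `g`, and
`2 (1 + sin p) = (1 + z)(1 + z⁻¹)`, so the right-hand side is `N⁻¹ Σ_z ĝ†(z) ĝ(z⁻¹)`,
which is `Σ_j g_j† g_j` by Parseval.
-/

open Complex Matrix

noncomputable section

namespace SpinChain

/-- The state space of the `N`-site spin chain, `(ℂ²)^{⊗N}` realised as functions on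
spin configurations. -/
abbrev V (N : ℕ) := (Fin N → Fin 2) → ℂ

/-- Operators on the spin chain, realised as matrices. -/
abbrev Op (N : ℕ) := Matrix (Fin N → Fin 2) (Fin N → Fin 2) ℂ

def sigmaX : Matrix (Fin 2) (Fin 2) ℂ := !![0, 1; 1, 0]
def sigmaY : Matrix (Fin 2) (Fin 2) ℂ := !![0, -I; I, 0]
def sigmaZ : Matrix (Fin 2) (Fin 2) ℂ := !![1, 0; 0, -1]
def sigmaPlus : Matrix (Fin 2) (Fin 2) ℂ := ((1 : ℂ)/2) • (sigmaX + I • sigmaY)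
def sigmaMinus : Matrix (Fin 2) (Fin 2) ℂ := ((1 : ℂ)/2) • (sigmaX - I • sigmaY)

variable (N : ℕ)

/-- The operator acting as the 2×2 matrix `a` on the `j`-th tensor factor and as the
identity on the others. -/
def site (a : Matrix (Fin 2) (Fin 2) ℂ) (j : Fin N) : Op N :=
  Matrix.of fun x y =>
    a (x j) (y j) * ∏ k ∈ Finset.univ.filter (fun k => k ≠ j), (if x k = y k then (1 : ℂ) else 0)

/-- Jordan–Wigner string `∏_{k<j} diag(z 0, z 1)_k`. -/
def string (z : Fin 2 → ℂ) (j : Fin N) : Op N :=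
  (((List.finRange N).filter (fun k => decide (k < j))).map
    (fun k => site N (Matrix.diagonal z) k)).prod

/-- Jordan–Wigner fermion `c_j := i^{1−j}·(∏_{k<j} diag(−i,i)_k)·σ⁻_j`; here the index
`j : Fin N` labels the physical site `j+1`. -/
def c (j : Fin N) : Op N :=
  (I ^ (-(j : ℤ))) • (string N ![-I, I] j * site N sigmaMinus j)

/-- Jordan–Wigner fermion `c_j† := i^{j−1}·(∏_{k<j} diag(i,−i)_k)·σ⁺_j`. -/
def cd (j : Fin N) : Op N :=
  (I ^ ((j : ℕ))) • (string N ![I, -I] j * site N sigmaPlus j)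

/-- The `gl(1|1)` fermion `f_j := i^j c_j` (physical index `j = j.val + 1`). -/
def f (j : Fin N) : Op N := (I ^ ((j : ℕ) + 1)) • c N j

/-- The `gl(1|1)` fermion `f_j† := i^j c_j†`. -/
def fd (j : Fin N) : Op N := (I ^ ((j : ℕ) + 1)) • cd N j

/-- Cyclic successor on site indices. -/
def fsucc {N : ℕ} (j : Fin N) : Fin N := ⟨(j.val + 1) % N, Nat.mod_lt _ j.pos⟩

/-- Periodic Temperley–Lieb generators
`e_j = (f_j+f_{j+1})(f_j†+f_{j+1}†)`, with `e_N = (f_N+f_1)(f_N†+f_1†)`. -/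
def e (j : Fin N) : Op N := (f N j + f N (fsucc j)) * (fd N j + fd N (fsucc j))

/-- `F_(m) := Σ_{j_1<⋯<j_m} f_{j_1}⋯f_{j_m}`. -/
def Fg (m : ℕ) : Op N :=
  ∑ s ∈ Finset.univ.powersetCard m, ((s.sort (· ≤ ·)).map (f N)).prod

/-- `F†_(m) := Σ_{j_1<⋯<j_m} f†_{j_1}⋯f†_{j_m}`. -/
def Fdg (m : ℕ) : Op N :=
  ∑ s ∈ Finset.univ.powersetCard m, ((s.sort (· ≤ ·)).map (fd N)).prod

/-- `S^z := (1/2) Σ_j σ^z_j`. -/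
def Sz : Op N := ((1 : ℂ)/2) • ∑ j : Fin N, site N sigmaZ j


/-- The Fourier-mode annihilation operator `θ_p := N^{−1/2} Σ_{k=1}^N e^{−ikp} c_k`
(a 2π-periodic function of the real momentum `p`). -/
def theta (p : ℝ) : Op N :=
  ((Real.sqrt N : ℂ))⁻¹ • ∑ k : Fin N, Complex.exp (-(I * ((k : ℕ) + 1) * (p : ℂ))) • c N k

/-- The Fourier-mode creation operator `θ_p† := N^{−1/2} Σ_{k=1}^N e^{ikp} c_k†`. -/
def thetad (p : ℝ) : Op N :=
  ((Real.sqrt N : ℂ))⁻¹ • ∑ k : Fin N, Complex.exp (I * ((k : ℕ) + 1) * (p : ℂ)) • cd N k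

/-- The allowed momenta of the periodic gl(1|1) chain: `p_m = 2πm/N` for `L` even,
`p_m = (2m−1)π/N` for `L` odd (`m = 1, …, N`, labelled here by `m : Fin N ↦ m+1`). -/
def mom (L : ℕ) (m : Fin (2 * L)) : ℝ :=
  if Even L then 2 * Real.pi * ((m : ℕ) + 1) / (2 * L)
  else (2 * ((m : ℕ) : ℝ) + 1) * Real.pi / (2 * L)

def tensorOp (g : Fin N → Matrix (Fin 2) (Fin 2) ℂ) : Op N :=
  Matrix.of fun x y => ∏ k, g k (x k) (y k)

variable {N}

lemma tensorOp_mul (g h : Fin N → Matrix (Fin 2) (Fin 2) ℂ) :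
    tensorOp N g * tensorOp N h = tensorOp N (g * h) := by
  ext x y
  simp only [tensorOp, Matrix.mul_apply, Matrix.of_apply, Pi.mul_apply, ← Finset.prod_mul_distrib,
    Finset.prod_univ_sum, Fintype.piFinset_univ]

lemma tensorOp_one : tensorOp N 1 = 1 := by
  ext x y
  by_cases h : x = y
  · subst h; simp [tensorOp]
  · obtain ⟨k, hk⟩ := Function.ne_iff.mp h
    simpa [tensorOp, h] using Finset.prod_eq_zero (Finset.mem_univ k) (by simp [hk])

lemma site_eq_tensorOp (a : Matrix (Fin 2) (Fin 2) ℂ) (j : Fin N) :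
    site N a j = tensorOp N (Pi.mulSingle j a) := by
  ext x y
  rw [site, tensorOp, Matrix.of_apply, Matrix.of_apply,
    ← Finset.mul_prod_erase _ _ (Finset.mem_univ j), Finset.filter_ne']
  congr 1
  · simp
  · refine Finset.prod_congr rfl fun k hk => ?_
    simp [Finset.ne_of_mem_erase hk, Matrix.one_apply]

lemma site_add (a b : Matrix (Fin 2) (Fin 2) ℂ) (j : Fin N) :
    site N (a + b) j = site N a j + site N b j := by
  ext x y
  simp [site, add_mul]

lemma tensorOp_update_smul (g : Fin N → Matrix (Fin 2) (Fin 2) ℂ) (j : Fin N) (s : ℂ) :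
    tensorOp N (Function.update g j (s • g j)) = s • tensorOp N g := by
  ext x y
  simp only [tensorOp, Matrix.of_apply, Matrix.smul_apply, smul_eq_mul]
  rw [← Finset.mul_prod_erase _ _ (Finset.mem_univ j),
    ← Finset.mul_prod_erase _ _ (Finset.mem_univ j),
    Finset.prod_congr rfl fun k hk => by rw [Function.update_of_ne (Finset.ne_of_mem_erase hk)]]
  simp [mul_assoc]

lemma tensorOp_mul_eq_neg (g h : Fin N → Matrix (Fin 2) (Fin 2) ℂ) (j : Fin N)
    (hj : g j * h j = -(h j * g j)) (hk : ∀ k ≠ j, Commute (g k) (h k)) :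
    tensorOp N g * tensorOp N h = -(tensorOp N h * tensorOp N g) := by
  have hgh : g * h = Function.update (h * g) j ((-1 : ℂ) • (h * g) j) := by
    funext k
    by_cases hkj : k = j
    · subst hkj; simp [hj]
    · simp [Function.update_of_ne hkj, (hk k hkj).eq]
  rw [tensorOp_mul, tensorOp_mul, hgh, tensorOp_update_smul, neg_one_smul]

lemma list_prod_map_site (a : Fin N → Matrix (Fin 2) (Fin 2) ℂ) :
    ∀ l : List (Fin N), l.Nodup →
      (l.map fun k => site N (a k) k).prod = tensorOp N fun k => if k ∈ l then a k else 1
  | [], _ => by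
    simp only [List.map_nil, List.prod_nil, List.not_mem_nil, if_false]
    exact tensorOp_one.symm
  | j :: l, hl => by
    obtain ⟨hj, hl⟩ := List.nodup_cons.mp hl
    rw [List.map_cons, List.prod_cons, list_prod_map_site a l hl, site_eq_tensorOp, tensorOp_mul]
    congr 1
    funext k
    by_cases hkj : k = j
    · subst hkj; simp [hj]
    · simp [hkj]

lemma string_eq_tensorOp (z : Fin 2 → ℂ) (j : Fin N) :
    string N z j = tensorOp N fun k => if k < j then diagonal z else 1 := by
  rw [string, list_prod_map_site (fun _ => diagonal z) _ ((List.nodup_finRange N).filter _)]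
  simp

lemma sigmaMinus_eq : sigmaMinus = !![0, 0; 1, 0] := by
  ext i j; fin_cases i <;> fin_cases j <;> norm_num [sigmaMinus, sigmaX, sigmaY]

lemma sigmaPlus_eq : sigmaPlus = !![0, 1; 0, 0] := by
  ext i j; fin_cases i <;> fin_cases j <;> norm_num [sigmaPlus, sigmaX, sigmaY]

lemma sigmaMinus_mul_diagonal_I_neg_I :
    sigmaMinus * diagonal ![I, -I] = -(diagonal ![I, -I] * sigmaMinus) := by
  ext i j; fin_cases i <;> fin_cases j <;> simp [sigmaMinus_eq]

lemma sigmaPlus_mul_diagonal_neg_I_I :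
    sigmaPlus * diagonal ![-I, I] = -(diagonal ![-I, I] * sigmaPlus) := by
  ext i j; fin_cases i <;> fin_cases j <;> simp [sigmaPlus_eq]

lemma sigmaMinus_mul_sigmaPlus_add_sigmaPlus_mul_sigmaMinus :
    sigmaMinus * sigmaPlus + sigmaPlus * sigmaMinus = 1 := by
  ext i j; fin_cases i <;> fin_cases j <;> simp [sigmaPlus_eq, sigmaMinus_eq]

lemma diagonal_neg_I_I_mul_diagonal_I_neg_I : diagonal ![-I, I] * diagonal ![I, -I] = 1 := by
  ext i j; fin_cases i <;> fin_cases j <;> simp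

lemma diagonal_I_neg_I_mul_diagonal_neg_I_I : diagonal ![I, -I] * diagonal ![-I, I] = 1 := by
  ext i j; fin_cases i <;> fin_cases j <;> simp

variable (N) in
def jwFactor (z : Fin 2 → ℂ) (a : Matrix (Fin 2) (Fin 2) ℂ) (j : Fin N) :
    Fin N → Matrix (Fin 2) (Fin 2) ℂ :=
  fun k => if k < j then diagonal z else if k = j then a else 1

lemma string_mul_site (z : Fin 2 → ℂ) (a : Matrix (Fin 2) (Fin 2) ℂ) (j : Fin N) :
    string N z j * site N a j = tensorOp N (jwFactor N z a j) := by
  rw [string_eq_tensorOp, site_eq_tensorOp, tensorOp_mul]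
  congr 1
  funext k
  rcases lt_trichotomy k j with hkj | rfl | hkj
  · simp [jwFactor, hkj, hkj.ne]
  · simp [jwFactor]
  · simp [jwFactor, hkj.not_gt, hkj.ne']

lemma tensorOp_jwFactor_mul_of_lt {z z' : Fin 2 → ℂ} {a b : Matrix (Fin 2) (Fin 2) ℂ}
    {j k : Fin N} (hjk : j < k) (ha : a * diagonal z' = -(diagonal z' * a)) :
    tensorOp N (jwFactor N z a j) * tensorOp N (jwFactor N z' b k) =
      -(tensorOp N (jwFactor N z' b k) * tensorOp N (jwFactor N z a j)) := by
  refine tensorOp_mul_eq_neg _ _ j (by simpa [jwFactor, hjk] using ha) fun l hlj => ?_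
  by_cases hl : l < j
  · simpa [jwFactor, hl, hl.trans hjk] using (commute_diagonal z z')
  · simp [jwFactor, hl, hlj]

lemma tensorOp_jwFactor_mul_self {z z' : Fin 2 → ℂ} (hz : diagonal z * diagonal z' = 1)
    (a b : Matrix (Fin 2) (Fin 2) ℂ) (j : Fin N) :
    tensorOp N (jwFactor N z a j) * tensorOp N (jwFactor N z' b j) = site N (a * b) j := by
  rw [tensorOp_mul, site_eq_tensorOp]
  congr 1
  funext k
  rcases lt_trichotomy k j with hkj | rfl | hkj
  · simp [jwFactor, hkj, hkj.ne, hz]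
  · simp [jwFactor]
  · simp [jwFactor, hkj.not_gt, hkj.ne']

lemma c_eq_tensorOp (j : Fin N) :
    c N j = I ^ (-(j : ℤ)) • tensorOp N (jwFactor N ![-I, I] sigmaMinus j) := by
  rw [c, string_mul_site]

lemma cd_eq_tensorOp (j : Fin N) :
    cd N j = I ^ (j : ℕ) • tensorOp N (jwFactor N ![I, -I] sigmaPlus j) := by
  rw [cd, string_mul_site]

lemma c_mul_cd_add_cd_mul_c_self (j : Fin N) : c N j * cd N j + cd N j * c N j = 1 := by
  have hI : I ^ (j : ℕ) * I ^ (-(j : ℤ)) = 1 := by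
    rw [← zpow_natCast, ← zpow_add₀ I_ne_zero, add_neg_cancel, zpow_zero]
  rw [c_eq_tensorOp, cd_eq_tensorOp, smul_mul_smul_comm, smul_mul_smul_comm, mul_comm (I ^ _),
    ← smul_add, hI, one_smul, tensorOp_jwFactor_mul_self diagonal_neg_I_I_mul_diagonal_I_neg_I,
    tensorOp_jwFactor_mul_self diagonal_I_neg_I_mul_diagonal_neg_I_I, ← site_add,
    sigmaMinus_mul_sigmaPlus_add_sigmaPlus_mul_sigmaMinus, site_eq_tensorOp, Pi.mulSingle_one,
    tensorOp_one]

lemma c_mul_cd_add_cd_mul_c_of_ne {j k : Fin N} (hjk : j ≠ k) :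
    c N j * cd N k + cd N k * c N j = 0 := by
  rw [c_eq_tensorOp, cd_eq_tensorOp, smul_mul_smul_comm, smul_mul_smul_comm, mul_comm (I ^ _),
    ← smul_add, add_eq_zero_iff_eq_neg.mpr, smul_zero]
  rcases hjk.lt_or_gt with hjk | hkj
  · exact tensorOp_jwFactor_mul_of_lt hjk sigmaMinus_mul_diagonal_I_neg_I
  · rw [tensorOp_jwFactor_mul_of_lt hkj sigmaPlus_mul_diagonal_neg_I_I, neg_neg]

lemma f_mul_fd_add_fd_mul_f_self (j : Fin N) :
    f N j * fd N j + fd N j * f N j = (-1 : ℂ) ^ ((j : ℕ) + 1) • 1 := by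
  rw [f, fd, smul_mul_smul_comm, smul_mul_smul_comm, ← smul_add, c_mul_cd_add_cd_mul_c_self,
    ← mul_pow, I_mul_I]

lemma f_mul_fd_add_fd_mul_f_of_ne {j k : Fin N} (hjk : j ≠ k) :
    f N j * fd N k + fd N k * f N j = 0 := by
  rw [f, fd, smul_mul_smul_comm, smul_mul_smul_comm, mul_comm (I ^ _), ← smul_add,
    c_mul_cd_add_cd_mul_c_of_ne hjk, smul_zero]

lemma fsucc_eq_finRotate (j : Fin N) : fsucc j = finRotate N j := by
  have := j.neZero
  rw [finRotate_apply]
  ext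
  simp [fsucc, Fin.val_add]

lemma val_fsucc (j : Fin N) : (fsucc j : ℕ) = ((j : ℕ) + 1) % N := rfl

lemma fsucc_ne_self (hN : 1 < N) (j : Fin N) : fsucc j ≠ j := by
  intro h
  have := congrArg Fin.val h
  rw [val_fsucc] at this
  rcases Nat.lt_or_ge ((j : ℕ) + 1) N with hj | hj
  · rw [Nat.mod_eq_of_lt hj] at this; omega
  · rw [show (j : ℕ) + 1 = N by omega, Nat.mod_self] at this; omega

lemma neg_one_pow_fsucc (hN : Even N) (j : Fin N) :
    (-1 : ℂ) ^ (fsucc j : ℕ) = -(-1) ^ (j : ℕ) := by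
  rw [val_fsucc]
  rcases Nat.lt_or_ge ((j : ℕ) + 1) N with hj | hj
  · rw [Nat.mod_eq_of_lt hj, pow_succ, mul_neg_one]
  · have hjN : (j : ℕ) + 1 = N := by omega
    have hj : Odd (j : ℕ) := Nat.not_even_iff_odd.mp (Nat.even_add_one.mp (by rwa [hjN]))
    rw [hjN, Nat.mod_self, pow_zero, hj.neg_one_pow, neg_neg]

def bondSum {A : Type*} [Add A] (x : Fin N → A) (j : Fin N) : A := x j + x (fsucc j)

lemma neg_e_eq (hN : Even N) (j : Fin N) : -e N j = bondSum (fd N) j * bondSum (f N) j := by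
  have hN1 : 1 < N := by obtain ⟨n, rfl⟩ := hN; have := j.pos; omega
  have hs := fsucc_ne_self hN1 j
  refine neg_eq_of_add_eq_zero_right ?_
  set s := fsucc j
  calc e N j + bondSum (fd N) j * bondSum (f N) j
      = (f N j * fd N j + fd N j * f N j) + (f N s * fd N s + fd N s * f N s)
        + (f N j * fd N s + fd N s * f N j) + (f N s * fd N j + fd N j * f N s) := by
        simp only [e, bondSum, add_mul, mul_add]; abel
    _ = 0 := by
        rw [f_mul_fd_add_fd_mul_f_self, f_mul_fd_add_fd_mul_f_self, pow_succ _ (s : ℕ),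
          neg_one_pow_fsucc hN, f_mul_fd_add_fd_mul_f_of_ne hs.symm,
          f_mul_fd_add_fd_mul_f_of_ne hs, pow_succ, ← add_smul]
        simp

lemma _root_.Fin.natCast_dvd_sub_iff (j k : Fin N) : (N : ℤ) ∣ (j : ℤ) - k ↔ j = k := by
  refine ⟨fun h => Fin.ext ?_, fun h => by simp [h]⟩
  have := Int.eq_zero_of_abs_lt_dvd h (abs_sub_lt_iff.mpr ⟨by omega, by omega⟩)
  omega

lemma _root_.IsPrimitiveRoot.sum_mul_pow_zpow {ζ w : ℂ} (hζ : IsPrimitiveRoot ζ N)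
    (hw : w ^ N = 1) (d : ℤ) :
    ∑ m : Fin N, (w * ζ ^ (m : ℕ)) ^ d = if (N : ℤ) ∣ d then (N : ℂ) else 0 := by
  have hterm : ∀ m : ℕ, (w * ζ ^ m) ^ d = w ^ d * (ζ ^ d) ^ m := fun m => by
    rw [mul_zpow, ← zpow_natCast, ← zpow_natCast, zpow_comm]
  simp only [hterm]
  rw [← Finset.mul_sum, Fin.sum_univ_eq_sum_range (fun m => (ζ ^ d) ^ m)]
  split_ifs with h
  · obtain ⟨t, rfl⟩ := h
    rw [_root_.zpow_mul, _root_.zpow_mul, zpow_natCast, zpow_natCast, hw, hζ.pow_eq_one]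
    simp
  · have hne : ζ ^ d ≠ 1 := fun h' => h ((hζ.zpow_eq_one_iff_dvd d).mp h')
    rw [geom_sum_eq hne, ← zpow_natCast, zpow_comm, zpow_natCast, hζ.pow_eq_one]
    simp

lemma _root_.IsPrimitiveRoot.sum_pow_succ_mul_inv_pow_succ {ζ w : ℂ}
    (hζ : IsPrimitiveRoot ζ N) (hw : w ^ N = 1) (j k : Fin N) :
    ∑ m : Fin N, (w * ζ ^ (m : ℕ)) ^ ((j : ℕ) + 1) * (w * ζ ^ (m : ℕ))⁻¹ ^ ((k : ℕ) + 1) =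
      if j = k then (N : ℂ) else 0 := by
  have hN : N ≠ 0 := j.pos.ne'
  have hw0 : w ≠ 0 := by rintro rfl; simp [zero_pow hN] at hw
  have hterm (u : ℂ) (hu : u ≠ 0) :
      u ^ ((j : ℕ) + 1) * u⁻¹ ^ ((k : ℕ) + 1) = u ^ ((j : ℤ) - k) := by
    rw [show ((j : ℕ) : ℤ) - (k : ℕ) = (((j : ℕ) + 1 : ℕ) : ℤ) - ((k : ℕ) + 1 : ℕ) by
      push_cast; ring, zpow_sub₀ hu, zpow_natCast, zpow_natCast, div_eq_mul_inv, inv_pow]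
  simp only [hterm _ (mul_ne_zero hw0 (pow_ne_zero _ (hζ.ne_zero hN))), hζ.sum_mul_pow_zpow hw,
    Fin.natCast_dvd_sub_iff]

section Fourier

variable {A : Type*}

def fourier [AddCommMonoid A] [Module ℂ A] (x : Fin N → A) (z : ℂ) : A :=
  ∑ k : Fin N, z ^ ((k : ℕ) + 1) • x k

lemma smul_fourier_comp_fsucc [AddCommMonoid A] [Module ℂ A] {z : ℂ} (hz : z ^ N = 1)
    (x : Fin N → A) : z • fourier (fun k => x (fsucc k)) z = fourier x z := by
  rw [fourier, fourier, Finset.smul_sum]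
  conv_rhs => rw [← Equiv.sum_comp (finRotate N)]
  refine Finset.sum_congr rfl fun k _ => ?_
  rw [smul_smul, ← fsucc_eq_finRotate, val_fsucc, pow_succ _ ((_ + 1) % N),
    ← pow_eq_pow_mod _ hz, mul_comm]

lemma fourier_bondSum [AddCommMonoid A] [Module ℂ A] {z : ℂ} (hz : z ^ N = 1) (hz0 : z ≠ 0)
    (x : Fin N → A) : fourier (bondSum x) z = (1 + z⁻¹) • fourier x z := by
  have hshift : fourier (fun k => x (fsucc k)) z = z⁻¹ • fourier x z :=
    (eq_inv_smul_iff₀ hz0).mpr (smul_fourier_comp_fsucc hz x)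
  rw [add_smul, one_smul, ← hshift, fourier, fourier, fourier, ← Finset.sum_add_distrib]
  simp only [bondSum, smul_add]

lemma sum_fourier_mul_fourier_inv [Ring A] [Algebra ℂ A] {ζ w : ℂ} (hζ : IsPrimitiveRoot ζ N)
    (hw : w ^ N = 1) (x y : Fin N → A) :
    ∑ m : Fin N, fourier x (w * ζ ^ (m : ℕ)) * fourier y (w * ζ ^ (m : ℕ))⁻¹ =
      (N : ℂ) • ∑ j, x j * y j := by
  simp only [fourier, Finset.sum_mul_sum, smul_mul_smul_comm]
  rw [Finset.sum_comm, Finset.smul_sum]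
  refine Finset.sum_congr rfl fun j _ => ?_
  rw [Finset.sum_comm]
  simp only [← Finset.sum_smul, hζ.sum_pow_succ_mul_inv_pow_succ hw, ite_smul, zero_smul,
    Finset.sum_ite_eq, Finset.mem_univ, if_true]

end Fourier

lemma c_eq_smul_f (j : Fin N) : c N j = (-I) ^ ((j : ℕ) + 1) • f N j := by
  rw [f, smul_smul, ← mul_pow, neg_mul, I_mul_I, neg_neg, one_pow, one_smul]

lemma cd_eq_smul_fd (j : Fin N) : cd N j = (-I) ^ ((j : ℕ) + 1) • fd N j := by
  rw [fd, smul_smul, ← mul_pow, neg_mul, I_mul_I, neg_neg, one_pow, one_smul]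

lemma exp_mul_neg_I_pow (p : ℂ) (k : ℕ) :
    exp (I * ((k : ℂ) + 1) * p) * (-I) ^ (k + 1) = (-I * exp (I * p)) ^ (k + 1) := by
  rw [mul_pow, ← exp_nat_mul, mul_comm]
  push_cast
  ring_nf

lemma thetad_eq_fourier (p : ℝ) :
    thetad N p = ((Real.sqrt N : ℂ))⁻¹ • fourier (fd N) (-I * exp (I * p)) := by
  rw [thetad, fourier]
  congr 1
  refine Finset.sum_congr rfl fun k _ => ?_
  rw [cd_eq_smul_fd, smul_smul, exp_mul_neg_I_pow]

lemma theta_eq_fourier (p : ℝ) :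
    theta N p = ((Real.sqrt N : ℂ))⁻¹ • fourier (f N) (-I * exp (-(I * p))) := by
  rw [theta, fourier]
  congr 1
  refine Finset.sum_congr rfl fun k _ => ?_
  rw [c_eq_smul_f, smul_smul, ← mul_neg, ← mul_neg, exp_mul_neg_I_pow]

lemma smul_thetad_mul_theta_add_pi (p : ℝ) (hz : (-I * exp (I * p)) ^ N = 1) :
    (2 : ℂ) • (((1 + Real.sin p) : ℝ) : ℂ) • (thetad N p * theta N (p + Real.pi)) =
      (N : ℂ)⁻¹ • (fourier (bondSum (fd N)) (-I * exp (I * p)) *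
        fourier (bondSum (f N)) (-I * exp (I * p))⁻¹) := by
  set z := -I * exp (I * p) with hz_def
  have hz0 : z ≠ 0 := mul_ne_zero (neg_ne_zero.mpr I_ne_zero) (exp_ne_zero _)
  have hzinv : -I * exp (-(I * ((p + Real.pi : ℝ) : ℂ))) = z⁻¹ := by
    have hpi : exp (-(I * Real.pi)) = -1 := by
      rw [mul_comm, Complex.exp_neg, exp_pi_mul_I, inv_neg, inv_one]
    rw [hz_def, mul_inv, inv_neg, inv_I, neg_neg, ← Complex.exp_neg, ofReal_add, mul_add,
      neg_add, exp_add, hpi]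
    ring
  have hsin : (2 : ℂ) * (((1 + Real.sin p) : ℝ) : ℂ) = (1 + z⁻¹) * (1 + z) := by
    have he : exp (-(I * p)) * exp (I * p) = 1 := by rw [← Complex.exp_add]; simp
    rw [hz_def, mul_inv, inv_neg, inv_I, neg_neg, ← Complex.exp_neg, ofReal_add, ofReal_one,
      ofReal_sin, Complex.sin, neg_mul, mul_comm (p : ℂ) I]
    linear_combination (-1 : ℂ) * he + exp (-(I * p)) * exp (I * p) * I_sq
  have hsqrt : ((Real.sqrt N : ℂ))⁻¹ * ((Real.sqrt N : ℂ))⁻¹ = (N : ℂ)⁻¹ := by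
    rw [← mul_inv, ← ofReal_mul, Real.mul_self_sqrt (Nat.cast_nonneg N), ofReal_natCast]
  rw [thetad_eq_fourier, theta_eq_fourier, ← hz_def, hzinv, fourier_bondSum hz hz0,
    fourier_bondSum (by rw [inv_pow, hz, inv_one]) (inv_ne_zero hz0), inv_inv,
    smul_mul_smul_comm, smul_mul_smul_comm, smul_smul, smul_smul, smul_smul, hsqrt, ← hsin]
  congr 1
  ring

section Momenta

variable {L : ℕ}

lemma exp_mom_pow (m : Fin (2 * L)) : exp (I * mom L m) ^ (2 * L) = (-1) ^ L := by
  have hL : (L : ℂ) ≠ 0 := Nat.cast_ne_zero.mpr (by have := m.pos; omega)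
  rw [← exp_nat_mul, mom]
  split_ifs with h
  · rw [h.neg_one_pow, ← exp_nat_mul_two_pi_mul_I ((m : ℕ) + 1)]
    congr 1
    push_cast
    field_simp
  · rw [(Nat.not_even_iff_odd.mp h).neg_one_pow, ← exp_pi_mul_I,
      ← mul_one (exp (Real.pi * I)), ← exp_nat_mul_two_pi_mul_I m, ← Complex.exp_add]
    congr 1
    push_cast
    field_simp
    ring

lemma neg_I_mul_exp_mom_pow (m : Fin (2 * L)) : (-I * exp (I * mom L m)) ^ (2 * L) = 1 := by
  rw [mul_pow, exp_mom_pow, pow_mul, neg_sq, I_sq, ← mul_pow]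
  norm_num

lemma exists_neg_I_mul_exp_mom_eq (hL : 0 < L) :
    ∃ w : ℂ, w ^ (2 * L) = 1 ∧ ∀ m : Fin (2 * L),
      -I * exp (I * mom L m) = w * exp (2 * Real.pi * I / (2 * L : ℕ)) ^ (m : ℕ) := by
  refine ⟨_, neg_I_mul_exp_mom_pow ⟨0, by omega⟩, fun m => ?_⟩
  have hL' : (L : ℂ) ≠ 0 := Nat.cast_ne_zero.mpr hL.ne'
  rw [mul_assoc, ← exp_nat_mul, ← Complex.exp_add, mom, mom]
  congr 2
  split_ifs <;> push_cast [Fin.val_mk] <;> field_simp <;> ring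

end Momenta

/-- **Fourier diagonalisation of the periodic gl(1|1) Hamiltonian:**
`−Σ_{j=1}^{N} e_j = 2 Σ_{p ∈ P_N} (1 + sin p) θ_p† θ_{p+π}` (`N = 2L`).  Since
`θ` is 2π-periodic in its real argument, `θ_{p+π}` is the mode of the unique
element of `P_N` congruent to `p + π` modulo 2π. -/
theorem gl11_hamiltonian_fourier_diagonal (L : ℕ) (hL : 0 < L) :
    -(∑ j : Fin (2 * L), e (2 * L) j) =
      (2 : ℂ) • ∑ m : Fin (2 * L),
        (((1 + Real.sin (mom L m)) : ℝ) : ℂ) •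
          (thetad (2 * L) (mom L m) * theta (2 * L) (mom L m + Real.pi)) := by
  have hζ := Complex.isPrimitiveRoot_exp (2 * L) (by omega)
  calc -(∑ j : Fin (2 * L), e (2 * L) j)
      = ∑ j, bondSum (fd (2 * L)) j * bondSum (f (2 * L)) j := by
        rw [← Finset.sum_neg_distrib]
        exact Finset.sum_congr rfl fun j _ => neg_e_eq (even_two_mul L) j
    _ = ((2 * L : ℕ) : ℂ)⁻¹ • ∑ m : Fin (2 * L),
          fourier (bondSum (fd (2 * L))) (-I * exp (I * mom L m)) *
            fourier (bondSum (f (2 * L))) (-I * exp (I * mom L m))⁻¹ := by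
        obtain ⟨w, hw, hphase⟩ := exists_neg_I_mul_exp_mom_eq hL
        simp only [hphase]
        rw [sum_fourier_mul_fourier_inv hζ hw,
          inv_smul_smul₀ (Nat.cast_ne_zero.mpr (by omega))]
    _ = _ := by
        rw [Finset.smul_sum, Finset.smul_sum]
        exact Finset.sum_congr rfl fun m _ =>
          (smul_thetad_mul_theta_add_pi _ (neg_I_mul_exp_mom_pow m)).symm

end SpinChain

end
end

section
/- On the periodic gl(1|1) spin chain with N = 2L sites, the quadratic quantum-group generator fails to commute only with the boundary Temperley–Lieb generator, with explicit obstruction: [e_j, F_(2)] = 0 and [e_j, F†_(2)] = 0 for all 1 ≤ j ≤ N−1, while [e_N, F_(2)] = −2(f_N + f_1)·F_(1) and [e_N, F†_(2)] = 2(f_N† + f_1†)·F†_(1); in particular, [e_N, F_(2)] ≠ 0 whenever L ≥ 2. -/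
open Complex Matrix

noncomputable section

namespace SpinChain

variable (N : ℕ)

/-!
The Jordan–Wigner matrices `f_j`, `f_j†` obey the canonical anticommutation relations
`{f_j, f_k} = {f_j†, f_k†} = 0`, `{f_j, f_k†} = (-1)^j δ_jk`, and everything else is algebra in
an arbitrary ring carrying such a family. Being quadratic, `F_(2)` commutes with every `f_t`,
while `[f_m†, F_(2)] = (-1)^m (∑_{k>m} f_k - ∑_{k<m} f_k)`. For neighbours `j, j+1` the signs
alternate, so `[f_j† + f_{j+1}†, F_(2)] = ±(f_j + f_{j+1})`, which the nilpotent left factor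
`f_j + f_{j+1}` of `e_j` annihilates; `F†_(2)` is symmetric. For the boundary pair `(N, 1)` the two
signs agree because `N` is even, leaving `f_N + f_1 - 2 F_(1)`. The obstruction
`(f_N + f_1) F_(1)` is nonzero: anticommuting it with `f_2†` strips `F_(1)` off, and then
anticommuting `f_N + f_1` with `f_1†` gives `-1`.
-/

open Finset Function

section PairSums

variable {A : Type*} [Semiring A] {n : ℕ}

def sumPairs (a : Fin n → A) : A := ∑ l, ∑ k ∈ Iio l, a k * a l

theorem sort_pair {α : Type*} [LinearOrder α] {k l : α} (h : k < l) :
    ({k, l} : Finset α).sort (· ≤ ·) = [k, l] := by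
  rw [sort_insert _ (by simpa using h.le) (by simpa using h.ne), sort_singleton]

theorem sum_powersetCard_one_sort_prod (a : Fin n → A) :
    ∑ s ∈ univ.powersetCard 1, ((s.sort (· ≤ ·)).map a).prod = ∑ k, a k := by
  simp [powersetCard_one, sort_singleton]

theorem sum_powersetCard_two_sort_prod (a : Fin n → A) :
    ∑ s ∈ univ.powersetCard 2, ((s.sort (· ≤ ·)).map a).prod = sumPairs a := by
  rw [sumPairs, sum_sigma']
  symm
  refine sum_bij (fun p _ => {p.2, p.1}) ?_ ?_ ?_ ?_
  · rintro ⟨l, k⟩ hp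
    simp only [mem_sigma, mem_Iio] at hp
    simp [mem_powersetCard, card_pair hp.2.ne]
  · rintro ⟨l, k⟩ hp ⟨l', k'⟩ hp' heq
    simp only [mem_sigma, mem_Iio] at hp hp'
    have := congrArg (·.sort (· ≤ ·)) heq
    simp only [sort_pair hp.2, sort_pair hp'.2, List.cons.injEq, and_true] at this
    obtain ⟨rfl, rfl⟩ := this
    rfl
  · intro s hs
    obtain ⟨k, l, hkl, rfl⟩ := card_eq_two.mp (mem_powersetCard.mp hs).2
    rcases hkl.lt_or_gt with h | h
    · exact ⟨⟨l, k⟩, by simpa using h, rfl⟩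
    · exact ⟨⟨k, l⟩, by simpa using h, pair_comm _ _⟩
  · rintro ⟨l, k⟩ hp
    simp only [mem_sigma, mem_Iio] at hp
    simp [sort_pair hp.2]

end PairSums

section CAR

variable {A : Type*} [Ring A] {n : ℕ}

/-- `j : Fin n` stands for site `j + 1`, so `(-1) ^ (j + 1)` is the sign `(-1)^j` of
`{f_j, f_j†}` in the site numbering of the paper. -/
structure IsCAR (a b : Fin n → A) : Prop where
  mul_self_left : ∀ j, a j * a j = 0
  mul_self_right : ∀ j, b j * b j = 0
  anticomm_left : ∀ j k, a j * a k + a k * a j = 0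
  anticomm_right : ∀ j k, b j * b k + b k * b j = 0
  anticomm : ∀ j k, a j * b k + b k * a j = if j = k then (-1 : ℤ) ^ (j.val + 1) • 1 else 0

theorem _root_.Ring.add_lie (x y z : A) : ⁅x + y, z⁆ = ⁅x, z⁆ + ⁅y, z⁆ := by
  simp only [Ring.lie_def, add_mul, mul_add]
  abel

theorem _root_.Commute.mul_lie_of_left {x z : A} (y : A) (h : Commute x z) :
    ⁅x * y, z⁆ = x * ⁅y, z⁆ := by
  rw [Ring.lie_def, Ring.lie_def, mul_sub, ← mul_assoc z, ← h.eq, mul_assoc, mul_assoc]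

theorem _root_.Commute.mul_lie_of_right (x : A) {y z : A} (h : Commute y z) :
    ⁅x * y, z⁆ = ⁅x, z⁆ * y := by
  rw [Ring.lie_def, Ring.lie_def, sub_mul, mul_assoc, h.eq, mul_assoc, mul_assoc]

namespace IsCAR

variable {a b : Fin n → A}

theorem symm (h : IsCAR a b) : IsCAR b a where
  mul_self_left := h.mul_self_right
  mul_self_right := h.mul_self_left
  anticomm_left := h.anticomm_right
  anticomm_right := h.anticomm_left
  anticomm j k := by
    rw [add_comm, h.anticomm k j]
    by_cases hjk : j = k
    · subst hjk; rfl
    · simp [hjk, Ne.symm hjk]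

theorem lie_sumPairs (h : IsCAR a b) (m : Fin n) :
    ⁅b m, sumPairs a⁆ = (-1 : ℤ) ^ (m.val + 1) • (∑ l ∈ Ioi m, a l - ∑ k ∈ Iio m, a k) := by
  have pair : ∀ k l, b m * (a k * a l) - a k * a l * b m =
      (if k = m then (-1 : ℤ) ^ (m.val + 1) • a l else 0) -
        if l = m then (-1 : ℤ) ^ (m.val + 1) • a k else 0 := by
    intro k l
    have expand : b m * (a k * a l) - a k * a l * b m =
        (b m * a k + a k * b m) * a l - a k * (b m * a l + a l * b m) := by noncomm_ring
    rw [expand, h.symm.anticomm m k, h.symm.anticomm m l]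
    split_ifs <;> subst_vars <;>
      simp_all only [smul_mul_assoc, mul_smul_comm, one_mul, mul_one, zero_mul, mul_zero, sub_zero,
        zero_sub, sub_self, not_true_eq_false]
  rw [Ring.lie_def, sumPairs, mul_sum, sum_mul, ← sum_sub_distrib]
  simp_rw [mul_sum, sum_mul, ← sum_sub_distrib, pair, sum_sub_distrib, sum_ite_eq', mem_Iio,
    sum_ite_irrel, sum_const_zero, sum_ite_eq', mem_univ, if_true, smul_sub, smul_sum,
    ← sum_filter, filter_lt_eq_Ioi]

theorem commute_sumPairs (h : IsCAR a b) (t : Fin n) : Commute (a t) (sumPairs a) := by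
  have anti : ∀ k, a t * a k = -(a k * a t) := fun k =>
    eq_neg_of_add_eq_zero_left (h.anticomm_left t k)
  refine Commute.sum_right _ _ _ fun l _ => Commute.sum_right _ _ _ fun k _ => ?_
  rw [Commute, SemiconjBy, ← mul_assoc, anti, neg_mul, mul_assoc, anti, mul_neg, neg_neg,
    mul_assoc]

theorem mul_self_add (h : IsCAR a b) (i j : Fin n) : (a i + a j) * (a i + a j) = 0 := by
  rw [add_mul, mul_add, mul_add, h.mul_self_left, h.mul_self_left, zero_add, add_zero,
    h.anticomm_left]

theorem sum_mul_anticomm (h : IsCAR a b) (t : Fin n) :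
    (∑ k, a k) * a t = -(a t * ∑ k, a k) := by
  rw [sum_mul, mul_sum, ← sum_neg_distrib]
  exact sum_congr rfl fun k _ => eq_neg_of_add_eq_zero_left (h.anticomm_left k t)

theorem lie_add_sumPairs_of_succ (h : IsCAR a b) {i j : Fin n} (hij : j.val = i.val + 1) :
    ⁅b i + b j, sumPairs a⁆ = (-1 : ℤ) ^ (i.val + 1) • (a i + a j) := by
  have hIoi : Ioi i = insert j (Ioi j) := by ext; simp; omega
  have hIio : Iio j = insert i (Iio i) := by ext; simp; omega
  rw [Ring.add_lie, h.lie_sumPairs, h.lie_sumPairs, hij, pow_succ _ (i.val + 1), mul_neg_one,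
    neg_smul, ← sub_eq_add_neg, ← smul_sub, hIoi, hIio, sum_insert (by simp), sum_insert (by simp)]
  abel_nf

theorem lie_add_sumPairs_of_boundary (h : IsCAR a b) (hn : Even n) {l z : Fin n}
    (hl : l.val + 1 = n) (hz : z.val = 0) :
    ⁅b l + b z, sumPairs a⁆ = a l + a z - (2 : ℤ) • ∑ k, a k := by
  have hIoi : Ioi l = ∅ := by ext; simp; omega
  have hIio : Iio l = univ.erase l := by ext; simp; omega
  have hIoi' : Ioi z = univ.erase z := by ext; simp; omega
  have hIio' : Iio z = ∅ := by ext; simp; omega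
  rw [Ring.add_lie, h.lie_sumPairs, h.lie_sumPairs, hl, hn.neg_one_pow, hz, hIoi, hIio, hIoi',
    hIio', sum_erase_eq_sub (mem_univ _), sum_erase_eq_sub (mem_univ _)]
  simp only [sum_empty]
  abel

theorem lie_mul_sumPairs_left_of_succ (h : IsCAR a b) {i j : Fin n} (hij : j.val = i.val + 1) :
    ⁅(a i + a j) * (b i + b j), sumPairs a⁆ = 0 := by
  rw [((h.commute_sumPairs i).add_left (h.commute_sumPairs j)).mul_lie_of_left,
    h.lie_add_sumPairs_of_succ hij, mul_smul_comm, h.mul_self_add, smul_zero]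

theorem lie_mul_sumPairs_right_of_succ (h : IsCAR a b) {i j : Fin n} (hij : j.val = i.val + 1) :
    ⁅(a i + a j) * (b i + b j), sumPairs b⁆ = 0 := by
  rw [((h.symm.commute_sumPairs i).add_left (h.symm.commute_sumPairs j)).mul_lie_of_right,
    h.symm.lie_add_sumPairs_of_succ hij, smul_mul_assoc, h.symm.mul_self_add, smul_zero]

theorem lie_mul_sumPairs_left_of_boundary (h : IsCAR a b) (hn : Even n) {l z : Fin n}
    (hl : l.val + 1 = n) (hz : z.val = 0) :
    ⁅(a l + a z) * (b l + b z), sumPairs a⁆ = (-2 : ℤ) • ((a l + a z) * ∑ k, a k) := by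
  rw [((h.commute_sumPairs l).add_left (h.commute_sumPairs z)).mul_lie_of_left,
    h.lie_add_sumPairs_of_boundary hn hl hz, mul_sub, h.mul_self_add, mul_smul_comm, zero_sub,
    ← neg_smul]

theorem lie_mul_sumPairs_right_of_boundary (h : IsCAR a b) (hn : Even n) {l z : Fin n}
    (hl : l.val + 1 = n) (hz : z.val = 0) :
    ⁅(a l + a z) * (b l + b z), sumPairs b⁆ = (2 : ℤ) • ((b l + b z) * ∑ k, b k) := by
  rw [((h.symm.commute_sumPairs l).add_left (h.symm.commute_sumPairs z)).mul_lie_of_right,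
    h.symm.lie_add_sumPairs_of_boundary hn hl hz, sub_mul, h.symm.mul_self_add, smul_mul_assoc,
    zero_sub, mul_add, h.symm.sum_mul_anticomm, h.symm.sum_mul_anticomm, ← neg_add, ← add_mul,
    smul_neg, neg_neg]

theorem anticomm_sum (h : IsCAR a b) (m : Fin n) :
    b m * ∑ k, a k + (∑ k, a k) * b m = (-1 : ℤ) ^ (m.val + 1) • 1 := by
  rw [mul_sum, sum_mul, ← sum_add_distrib]
  simp_rw [h.symm.anticomm m]
  rw [sum_ite_eq, if_pos (mem_univ m)]

theorem mul_sum_ne_zero [Nontrivial A] (h : IsCAR a b) (hn : 4 ≤ n) {l z : Fin n}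
    (hl : l.val + 1 = n) (hz : z.val = 0) : (a l + a z) * ∑ k, a k ≠ 0 := by
  intro hzero
  have anti : ∀ m, b m * (a l + a z) + (a l + a z) * b m =
      (if m = l then (-1 : ℤ) ^ (m.val + 1) • 1 else 0) +
        if m = z then (-1 : ℤ) ^ (m.val + 1) • 1 else 0 := by
    intro m
    rw [mul_add, add_mul, add_add_add_comm, h.symm.anticomm, h.symm.anticomm]
  let one : Fin n := ⟨1, by omega⟩
  have hA : a l + a z = 0 := by
    have key : (0 : A) = -(a l + a z) := calc
      0 = b one * ((a l + a z) * ∑ k, a k) - (a l + a z) * (∑ k, a k) * b one := by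
          rw [hzero, mul_zero, zero_mul, sub_zero]
      _ = (b one * (a l + a z) + (a l + a z) * b one) * ∑ k, a k -
          (a l + a z) * (b one * ∑ k, a k + (∑ k, a k) * b one) := by noncomm_ring
      _ = -(a l + a z) := by
          rw [anti, h.anticomm_sum, if_neg (by simp [one, Fin.ext_iff]; omega),
            if_neg (by simp [one, Fin.ext_iff]; omega)]
          simp [one]
    exact neg_eq_zero.mp key.symm
  have := anti z
  rw [hA, if_neg (by simp [Fin.ext_iff]; omega), if_pos rfl, hz] at this
  simp at this

end IsCAR

end CAR

variable {N}

theorem site_apply (a : Matrix (Fin 2) (Fin 2) ℂ) (j : Fin N) (x y : Fin N → Fin 2) :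
    site N a j x y = if ∀ k ≠ j, x k = y k then a (x j) (y j) else 0 := by
  simp only [site, of_apply, prod_boole, mem_filter, mem_univ, true_and, mul_ite, mul_one,
    mul_zero]

theorem site_diagonal (z : Fin 2 → ℂ) (j : Fin N) :
    site N (diagonal z) j = diagonal fun x => z (x j) := by
  ext x y
  rw [site_apply]
  by_cases hxy : x = y
  · subst hxy
    simp
  · rw [diagonal_apply_ne _ hxy]
    split_ifs with h
    · refine diagonal_apply_ne _ fun hj => hxy (funext fun k => ?_)
      by_cases hk : k = j
      · rwa [hk]
      · exact h k hk
    · rfl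

theorem string_eq_diagonal (z : Fin 2 → ℂ) (j : Fin N) :
    string N z j = diagonal fun x => ∏ k ∈ Iio j, z (x k) := by
  have hlist : ∀ l : List (Fin N), (l.map fun k => site N (diagonal z) k).prod =
      diagonal fun x => (l.map fun k => z (x k)).prod := by
    intro l
    induction l with
    | nil => simp
    | cons k l ih =>
      rw [List.map_cons, List.prod_cons, ih, site_diagonal, diagonal_mul_diagonal]
      simp only [List.map_cons, List.prod_cons]
  rw [string, hlist]
  congr
  funext x
  rw [← List.prod_toFinset _ ((List.nodup_finRange N).filter _)]
  congr
  ext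
  simp

theorem site_single_apply (v w : Fin 2) (j : Fin N) (x y : Fin N → Fin 2) :
    site N (single v w 1) j x y = if x j = v ∧ y = update x j w then 1 else 0 := by
  simp only [site_apply, single_apply, eq_update_iff]
  rw [← ite_and]
  congr 1
  apply propext
  constructor
  · rintro ⟨h, rfl, rfl⟩
    exact ⟨rfl, rfl, fun k hk => (h k hk).symm⟩
  · rintro ⟨rfl, rfl, h⟩
    exact ⟨fun k hk => (h k hk).symm, rfl, rfl⟩

theorem sigmaMinus_eq_single : sigmaMinus = single 1 0 1 := by
  ext r s
  fin_cases r <;> fin_cases s <;> norm_num [sigmaMinus, sigmaX, sigmaY]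

theorem sigmaPlus_eq_single : sigmaPlus = single 0 1 1 := by
  ext r s
  fin_cases r <;> fin_cases s <;> norm_num [sigmaPlus, sigmaX, sigmaY]

def stringValue (j : Fin N) (x : Fin N → Fin 2) : ℂ := ∏ k ∈ Iio j, ![-I, I] (x k)

def ladder (j : Fin N) (v w : Fin 2) : Op N :=
  of fun x y => if x j = v ∧ y = update x j w then I * stringValue j x else 0

theorem f_eq_ladder (j : Fin N) : f N j = ladder j 1 0 := by
  ext x y
  have hI : I ^ ((j : ℕ) + 1) * I ^ (-(j : ℤ)) = I := by
    rw [_root_.zpow_neg, zpow_natCast, pow_succ, mul_comm, ← mul_assoc,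
      inv_mul_cancel₀ (pow_ne_zero _ I_ne_zero), one_mul]
  simp only [f, c, Matrix.smul_apply, string_eq_diagonal, diagonal_mul, sigmaMinus_eq_single,
    site_single_apply, ladder, of_apply, stringValue, smul_eq_mul]
  split_ifs
  · rw [mul_one, ← mul_assoc, hI]
  · simp

theorem fd_eq_ladder (j : Fin N) : fd N j = ladder j 0 1 := by
  ext x y
  have hstring : ∏ k ∈ Iio j, ![I, -I] (x k) = (-1) ^ (j : ℕ) * stringValue j x := by
    rw [stringValue, ← Fin.card_Iio j, ← prod_neg]
    refine prod_congr rfl fun k _ => ?_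
    generalize x k = v
    fin_cases v <;> simp
  have hI : I ^ ((j : ℕ) + 1) * I ^ (j : ℕ) * (-1) ^ (j : ℕ) = I := by
    have hII : I * I * -1 = 1 := by rw [I_mul_I]; norm_num
    calc I ^ ((j : ℕ) + 1) * I ^ (j : ℕ) * (-1) ^ (j : ℕ) = I * (I * I * -1) ^ (j : ℕ) := by
          ring
      _ = I := by rw [hII, one_pow, mul_one]
  simp only [fd, cd, Matrix.smul_apply, string_eq_diagonal, diagonal_mul, sigmaPlus_eq_single,
    site_single_apply, ladder, of_apply, hstring, smul_eq_mul]
  split_ifs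
  · rw [mul_one, ← mul_assoc, ← mul_assoc, hI]
  · simp

theorem stringValue_update_of_le {j k : Fin N} (h : j ≤ k) (x : Fin N → Fin 2) (v : Fin 2) :
    stringValue j (update x k v) = stringValue j x :=
  prod_congr rfl fun m hm => by rw [update_of_ne ((mem_Iio.mp hm).trans_le h).ne]

theorem stringValue_update_of_lt {j k : Fin N} (h : k < j) (x : Fin N → Fin 2) {v : Fin 2}
    (hv : v ≠ x k) : stringValue j (update x k v) = -stringValue j x := by
  have hk : k ∈ Iio j := mem_Iio.mpr h
  have hflip : ![-I, I] v = -![-I, I] (x k) := by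
    revert hv
    generalize x k = u
    fin_cases u <;> fin_cases v <;> simp
  rw [stringValue, stringValue, ← mul_prod_erase _ _ hk, ← mul_prod_erase _ _ hk, update_self,
    prod_congr rfl fun m hm => by rw [update_of_ne (ne_of_mem_erase hm)], hflip, neg_mul]

theorem stringValue_mul_self (j : Fin N) (x : Fin N → Fin 2) :
    stringValue j x * stringValue j x = (-1) ^ (j : ℕ) := by
  have hsq : ∀ v : Fin 2, ![-I, I] v * ![-I, I] v = -1 := by
    intro v
    fin_cases v <;> simp
  rw [stringValue, ← prod_mul_distrib, prod_congr rfl fun k _ => hsq (x k), prod_const,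
    Fin.card_Iio]

theorem ladder_mul_apply (j : Fin N) (v w : Fin 2) (B : Op N) (x y : Fin N → Fin 2) :
    (ladder j v w * B) x y =
      if x j = v then I * stringValue j x * B (update x j w) y else 0 := by
  simp only [ladder, mul_apply, of_apply, ite_and, ite_mul, zero_mul, sum_ite_irrel, sum_ite_eq',
    mem_univ, if_true, sum_const_zero]

theorem ladder_anticomm_of_lt {j k : Fin N} (hjk : j < k) {v w v' w' : Fin 2} (hvw : v ≠ w) :
    ladder j v w * ladder k v' w' + ladder k v' w' * ladder j v w = 0 := by
  ext x y
  rw [Matrix.add_apply, ladder_mul_apply, ladder_mul_apply, Matrix.zero_apply]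
  simp only [ladder, of_apply, update_of_ne hjk.ne', update_of_ne hjk.ne, update_comm hjk.ne]
  by_cases hj : x j = v
  · rw [stringValue_update_of_lt hjk x (by rw [hj]; exact hvw.symm),
      stringValue_update_of_le hjk.le]
    split_ifs <;> first | ring1 | simp_all
  · simp [hj]

theorem ladder_mul_self (j : Fin N) {v w : Fin 2} (hvw : v ≠ w) :
    ladder j v w * ladder j v w = 0 := by
  ext x y
  rw [ladder_mul_apply]
  simp [ladder, hvw.symm]

theorem ladder_anticomm_self (j : Fin N) :
    ladder j 1 0 * ladder j 0 1 + ladder j 0 1 * ladder j 1 0 =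
      (-1 : ℤ) ^ ((j : ℕ) + 1) • 1 := by
  ext x y
  have hsq : (I * stringValue j x) * (I * stringValue j x) = (-1) ^ ((j : ℕ) + 1) := by
    rw [mul_mul_mul_comm, I_mul_I, stringValue_mul_self, pow_succ]
    ring
  rw [Matrix.add_apply, ladder_mul_apply, ladder_mul_apply]
  simp only [ladder, of_apply, update_self, update_idem, stringValue_update_of_le le_rfl]
  rw [Matrix.smul_apply, one_apply]
  have hu : ∀ v, x j = v → update x j v = x := fun v hv => by rw [← hv, update_eq_self]
  rcases (by omega : x j = 0 ∨ x j = 1) with h | h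
  · simp [h, hu 0 h, hsq, eq_comm]
  · simp [h, hu 1 h, hsq, eq_comm]

theorem ladder_anticomm_of_ne {j k : Fin N} (hjk : j ≠ k) {v w v' w' : Fin 2} (hvw : v ≠ w)
    (hvw' : v' ≠ w') : ladder j v w * ladder k v' w' + ladder k v' w' * ladder j v w = 0 := by
  rcases hjk.lt_or_gt with h | h
  · exact ladder_anticomm_of_lt h hvw
  · rw [add_comm]
    exact ladder_anticomm_of_lt h hvw'

theorem isCAR_f_fd (N : ℕ) : IsCAR (f N) (fd N) where
  mul_self_left j := by rw [f_eq_ladder]; exact ladder_mul_self j one_ne_zero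
  mul_self_right j := by rw [fd_eq_ladder]; exact ladder_mul_self j zero_ne_one
  anticomm_left j k := by
    simp only [f_eq_ladder]
    rcases eq_or_ne j k with rfl | hjk
    · rw [ladder_mul_self _ one_ne_zero, add_zero]
    · exact ladder_anticomm_of_ne hjk one_ne_zero one_ne_zero
  anticomm_right j k := by
    simp only [fd_eq_ladder]
    rcases eq_or_ne j k with rfl | hjk
    · rw [ladder_mul_self _ zero_ne_one, add_zero]
    · exact ladder_anticomm_of_ne hjk zero_ne_one zero_ne_one
  anticomm j k := by
    simp only [f_eq_ladder, fd_eq_ladder]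
    rcases eq_or_ne j k with rfl | hjk
    · rw [if_pos rfl, ladder_anticomm_self]
    · rw [if_neg hjk]
      exact ladder_anticomm_of_ne hjk one_ne_zero zero_ne_one

theorem Fg_one (N : ℕ) : Fg N 1 = ∑ k, f N k := sum_powersetCard_one_sort_prod _
theorem Fdg_one (N : ℕ) : Fdg N 1 = ∑ k, fd N k := sum_powersetCard_one_sort_prod _
theorem Fg_two (N : ℕ) : Fg N 2 = sumPairs (f N) := sum_powersetCard_two_sort_prod _
theorem Fdg_two (N : ℕ) : Fdg N 2 = sumPairs (fd N) := sum_powersetCard_two_sort_prod _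

theorem fsucc_val_of_lt {j : Fin N} (h : j.val + 1 < N) : (fsucc j).val = j.val + 1 :=
  Nat.mod_eq_of_lt h

theorem fsucc_val_of_eq {j : Fin N} (h : j.val + 1 = N) : (fsucc j).val = 0 := by
  simp [fsucc, h]

/-- **The quadratic quantum-group generators `F_(2)`, `F†_(2)` commute with all bulk
Temperley–Lieb generators but not with the boundary one**, with explicit
obstruction: `[e_j, F_(2)] = 0 = [e_j, F†_(2)]` for `1 ≤ j ≤ N−1`, while
`[e_N, F_(2)] = −2(f_N + f_1)F_(1)` and `[e_N, F†_(2)] = 2(f_N† + f_1†)F†_(1)`;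
the former is nonzero as soon as `L ≥ 2`. -/
theorem gl11_quadratic_generator_commutators (L : ℕ) (hL : 0 < L) :
    (∀ j : Fin (2 * L), (j : ℕ) + 1 ≤ 2 * L - 1 →
      ⁅e (2 * L) j, Fg (2 * L) 2⁆ = 0 ∧ ⁅e (2 * L) j, Fdg (2 * L) 2⁆ = 0) ∧
    ⁅e (2 * L) ⟨2 * L - 1, by omega⟩, Fg (2 * L) 2⁆ =
      (-2 : ℂ) • ((f (2 * L) ⟨2 * L - 1, by omega⟩ + f (2 * L) ⟨0, by omega⟩) * Fg (2 * L) 1) ∧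
    ⁅e (2 * L) ⟨2 * L - 1, by omega⟩, Fdg (2 * L) 2⁆ =
      (2 : ℂ) • ((fd (2 * L) ⟨2 * L - 1, by omega⟩ + fd (2 * L) ⟨0, by omega⟩) * Fdg (2 * L) 1) ∧
    (2 ≤ L → ⁅e (2 * L) ⟨2 * L - 1, by omega⟩, Fg (2 * L) 2⁆ ≠ 0) := by
  have h := isCAR_f_fd (2 * L)
  have hN : Even (2 * L) := even_two_mul L
  set l : Fin (2 * L) := ⟨2 * L - 1, by omega⟩
  have hl : l.val + 1 = 2 * L := by simp only [l]; omega
  have hz : fsucc l = ⟨0, by omega⟩ := Fin.ext (fsucc_val_of_eq hl)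
  have hF : ⁅e (2 * L) l, Fg (2 * L) 2⁆ =
      (-2 : ℂ) • ((f (2 * L) l + f (2 * L) ⟨0, by omega⟩) * Fg (2 * L) 1) := by
    rw [e, Fg_two, Fg_one, h.lie_mul_sumPairs_left_of_boundary hN hl (fsucc_val_of_eq hl), hz,
      ← Int.cast_smul_eq_zsmul ℂ]
    norm_num
  refine ⟨fun j hj => ?_, hF, ?_, fun _ => ?_⟩
  · have hsucc := fsucc_val_of_lt (show j.val + 1 < 2 * L by omega)
    rw [e, Fg_two, Fdg_two]
    exact ⟨h.lie_mul_sumPairs_left_of_succ hsucc, h.lie_mul_sumPairs_right_of_succ hsucc⟩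
  · rw [e, Fdg_two, Fdg_one, h.lie_mul_sumPairs_right_of_boundary hN hl (fsucc_val_of_eq hl), hz,
      ← Int.cast_smul_eq_zsmul ℂ]
    norm_num
  · rw [hF, Fg_one]
    exact smul_ne_zero (by norm_num) (h.mul_sum_ne_zero (by omega) hl rfl)

end SpinChain

end
end

section
/- Under the defining relations of the full quantum group U_q sl(2) at q = i (p = 2), the following identities hold for all integers m, n ≥ 1: [F, e^m] = m·((K+K⁻¹)/2)·e^{m−1}E and [E, f^n] = n·((K+K⁻¹)/2)·f^{n−1}F; consequently, for all m, n ≥ 0, f^n F e^m E = f^n e^m F E. -/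
private lemma aux_comm {A : Type*} [Ring A] [Algebra ℂ A] (F e c E : A)
    (hFe : F * e - e * F = c * E) (hce : Commute c e) (hEe : Commute E e) :
    ∀ m : ℕ, F * e ^ (m + 1) - e ^ (m + 1) * F = ((m : ℂ) + 1) • (c * (e ^ m * E)) := by
  intro m
  induction m with
  | zero => simpa using hFe
  | succ m ih =>
    have key : F * e ^ (m + 2) - e ^ (m + 2) * F
        = (F * e ^ (m + 1) - e ^ (m + 1) * F) * e + e ^ (m + 1) * (F * e - e * F) := by
      rw [pow_succ]; noncomm_ring
    have hA : e ^ m * E * e = e ^ (m + 1) * E := by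
      rw [mul_assoc, hEe.eq, ← mul_assoc, ← pow_succ]
    have hB : e ^ (m + 1) * (c * E) = c * (e ^ (m + 1) * E) := by
      rw [← mul_assoc, ← (hce.pow_right (m + 1)).eq, mul_assoc]
    rw [key, ih, hFe, smul_mul_assoc, mul_assoc c, hA, hB]
    push_cast
    module

/-- **Mixed commutation relations in the full quantum group `U_q sl(2)` at `q = i`:**
under the defining relations (with `e, f` the renormalised divided powers), one has
`[F, e^m] = m·((K+K⁻¹)/2)·e^{m−1}E` and `[E, f^n] = n·((K+K⁻¹)/2)·f^{n−1}F` for all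
`m, n ≥ 1`, and consequently `f^n F e^m E = f^n e^m F E` for all `m, n ≥ 0`. -/
theorem quantum_group_mixed_commutators
    (A : Type*) [Ring A] [Algebra ℂ A]
    (E F K Ki e f : A)
    (hKKi : K * Ki = 1) (hKiK : Ki * K = 1) (hK4 : K ^ 4 = 1)
    (hKE : K * E = -(E * K)) (hKF : K * F = -(F * K))
    (hE2 : E ^ 2 = 0) (hF2 : F ^ 2 = 0)
    (hEe : E * e = e * E) (hKe : K * e = e * K)
    (hFf : F * f = f * F) (hKf : K * f = f * K)
    (hFe : F * e - e * F = K ^ 2 * (((1 : ℂ)/2) • ((K + Ki) * E)))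
    (hEf : E * f - f * E = -(((1 : ℂ)/2) • (F * (K + Ki)))) :
    (∀ m : ℕ, 1 ≤ m →
      F * e ^ m - e ^ m * F = (m : ℂ) • (((1 : ℂ)/2) • ((K + Ki) * (e ^ (m - 1) * E)))) ∧
    (∀ n : ℕ, 1 ≤ n →
      E * f ^ n - f ^ n * E = (n : ℂ) • (((1 : ℂ)/2) • ((K + Ki) * (f ^ (n - 1) * F)))) ∧
    (∀ m n : ℕ, f ^ n * F * e ^ m * E = f ^ n * e ^ m * (F * E)) := by
  have hKi3 : Ki = K ^ 3 := by
    have h : K ^ 4 * Ki = K ^ 3 := by rw [pow_succ, mul_assoc, hKKi, mul_one]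
    rw [hK4, one_mul] at h; exact h
  have hK2 : K ^ 2 * (K + Ki) = K + Ki := by
    have h3 : K ^ 2 * K = Ki := by rw [← pow_succ, ← hKi3]
    have h5 : K ^ 2 * Ki = K := by
      rw [hKi3, ← pow_add]
      show K ^ (4 + 1) = K
      rw [pow_succ, hK4, one_mul]
    rw [mul_add, h3, h5, add_comm]
  set c : A := ((1 : ℂ)/2) • (K + Ki) with hc
  have hFe' : F * e - e * F = c * E := by
    rw [hFe, mul_smul_comm, ← mul_assoc, hK2, hc, smul_mul_assoc]
  have hFKi : F * Ki = -(Ki * F) := by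
    calc F * Ki = Ki * (K * F) * Ki := by rw [← mul_assoc Ki K F, hKiK, one_mul]
      _ = Ki * (-(F * K)) * Ki := by rw [hKF]
      _ = -(Ki * F * (K * Ki)) := by noncomm_ring
      _ = -(Ki * F) := by rw [hKKi, mul_one]
  have hEf' : E * f - f * E = c * F := by
    have hFK : F * K = -(K * F) := by rw [← neg_neg (F * K), ← hKF]
    have hanti : F * (K + Ki) = -((K + Ki) * F) := by
      rw [mul_add, add_mul, hFK, hFKi, neg_add]
    rw [hEf, hanti, smul_neg, neg_neg, hc, smul_mul_assoc]
  have cKe : Commute K e := hKe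
  have cKie : Commute Ki e := by rw [hKi3]; exact cKe.pow_left 3
  have cKf : Commute K f := hKf
  have cKif : Commute Ki f := by rw [hKi3]; exact cKf.pow_left 3
  have hce : Commute c e := (cKe.add_left cKie).smul_left _
  have hcf : Commute c f := (cKf.add_left cKif).smul_left _
  have hEe' : Commute E e := hEe
  have hFf' : Commute F f := hFf
  refine ⟨?_, ?_, ?_⟩
  · intro m hm
    obtain ⟨m', rfl⟩ : ∃ m', m = m' + 1 := ⟨m - 1, (Nat.succ_pred_eq_of_pos hm).symm⟩
    have h := aux_comm F e c E hFe' hce hEe' m'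
    rw [Nat.add_sub_cancel]
    push_cast
    rw [h, hc, smul_mul_assoc, smul_comm]
  · intro n hn
    obtain ⟨n', rfl⟩ : ∃ n', n = n' + 1 := ⟨n - 1, (Nat.succ_pred_eq_of_pos hn).symm⟩
    have h := aux_comm E f c F hEf' hcf hFf' n'
    rw [Nat.add_sub_cancel]
    push_cast
    rw [h, hc, smul_mul_assoc, smul_comm]
  · intro m n
    have key : ∀ m : ℕ, F * e ^ m * E = e ^ m * (F * E) := by
      intro m
      cases m with
      | zero => simp
      | succ m' =>
        have h := aux_comm F e c E hFe' hce hEe' m'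
        have h2 : F * e ^ (m' + 1) = e ^ (m' + 1) * F + ((m' : ℂ) + 1) • (c * (e ^ m' * E)) :=
          sub_eq_iff_eq_add'.mp h
        rw [h2, add_mul, smul_mul_assoc, mul_assoc c, mul_assoc (e ^ m'), ← pow_two, hE2,
          mul_zero, mul_zero, smul_zero, add_zero, mul_assoc]
    have key' := key m
    simp only [mul_assoc] at key' ⊢
    rw [key']
end

section
/- The vacuum value of the modified Hamiltonian H[cos²] is exactly (1/2)(cot(3π/N) − 3cot(π/N)) with N = 2L, and it has the asymptotics −4N/(3π) + o(1/N): for every integer L ≥ 1, −2 Σ_{m=1}^{L−1} sin³(mπ/L) = (1/2)( cot(3π/N) − 3 cot(π/N) ), and lim_{N→∞} N·( (1/2)(cot(3π/N) − 3cot(π/N)) + 4N/(3π) ) = 0 (limit over real N → ∞; note the N-linear contribution cancels in this combination). -/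
/-!
Since `4 sin³ y = 3 sin y - sin 3y`, the sum reduces to `∑_{m<L} sin (m kπ/L)` for `k = 1, 3`;
multiplied by `2 sin (kπ/(2L))` it telescopes, and as `k` is odd it equals `cot (kπ/(2L))`.
For the asymptotics, `½ (cot 3x - 3 cot x) = -4 cos³ x / sin 3x`, so with `x = π/N` the bracket is
`4 (sin 3x - 3x cos³ x) / (3x sin 3x)`. The Taylor polynomials of degree 3 of `sin 3x` and
`3x cos³ x` coincide, hence the bracket is `O(x³)` and `N` times it is `O(1/N²)`.
-/

open Real Filter

theorem sum_range_sin_mul_mul_two_sin_half (θ : ℝ) (L : ℕ) :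
    (∑ m ∈ Finset.range L, sin (m * θ)) * (2 * sin (θ / 2)) =
      cos (θ / 2) - cos ((L - 1 / 2) * θ) := by
  have hterm (m : ℕ) : sin (m * θ) * (2 * sin (θ / 2)) =
      cos ((m - 1 / 2) * θ) - cos ((((m + 1 : ℕ) : ℝ) - 1 / 2) * θ) := by
    have hsub : (m - 1 / 2) * θ = m * θ - θ / 2 := by ring
    have hadd : (((m + 1 : ℕ) : ℝ) - 1 / 2) * θ = m * θ + θ / 2 := by push_cast; ring
    rw [hsub, hadd, cos_sub, cos_add]
    ring
  rw [Finset.sum_mul, Finset.sum_congr rfl fun m _ => hterm m, Finset.sum_range_sub',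
    show (((0 : ℕ) : ℝ) - 1 / 2) * θ = -(θ / 2) by push_cast; ring, cos_neg]

theorem sin_odd_mul_pi_div_ne_zero {k : ℕ} (hk : Odd k) {L : ℕ} (hL : L ≠ 0) :
    sin (k * π / (2 * L)) ≠ 0 := by
  rw [Ne, sin_eq_zero_iff]
  rintro ⟨n, hn⟩
  have hL' : (L : ℝ) ≠ 0 := by exact_mod_cast hL
  have h : ((2 * (L * n) : ℤ) : ℝ) = (k : ℤ) := by
    push_cast
    field_simp at hn
    linarith [hn]
  have hkeven : Even (k : ℤ) := ⟨L * n, by rw [← Int.cast_injective h]; ring⟩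
  exact (Int.not_even_iff_odd.mpr (by exact_mod_cast hk)) hkeven

theorem sum_range_sin_odd_mul_pi_div {k : ℕ} (hk : Odd k) {L : ℕ} (hL : L ≠ 0) :
    ∑ m ∈ Finset.range L, sin (m * (k * π / L)) = cot (k * π / (2 * L)) := by
  have hL' : (L : ℝ) ≠ 0 := by exact_mod_cast hL
  have hhalf : k * π / L / 2 = k * π / (2 * L) := by field_simp
  have hlast : cos ((L - 1 / 2) * (k * π / L)) = -cos (k * π / (2 * L)) := by
    rw [show ((L : ℝ) - 1 / 2) * (k * π / L) = k * π - k * π / (2 * L) by field_simp,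
      cos_nat_mul_pi_sub, hk.neg_one_pow, neg_one_mul]
  have h := sum_range_sin_mul_mul_two_sin_half (k * π / L) L
  rw [hhalf, hlast, sub_neg_eq_add, ← two_mul] at h
  rw [cot_eq_cos_div_sin, eq_div_iff (sin_odd_mul_pi_div_ne_zero hk hL)]
  linarith

theorem sin_pow_three (x : ℝ) : sin x ^ 3 = (3 * sin x - sin (3 * x)) / 4 := by
  rw [sin_three_mul]; ring

theorem neg_two_mul_sum_Ico_sin_pow_three (L : ℕ) (hL : L ≠ 0) :
    -2 * ∑ m ∈ Finset.Ico 1 L, sin (m * π / L) ^ 3 =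
      (1 / 2) * (cot (3 * π / (2 * L)) - 3 * cot (π / (2 * L))) := by
  have hrange : ∑ m ∈ Finset.Ico 1 L, sin (m * π / L) ^ 3 =
      ∑ m ∈ Finset.range L, sin (m * π / L) ^ 3 := by
    rw [Finset.range_eq_Ico, Finset.sum_eq_sum_Ico_succ_bot (Nat.pos_of_ne_zero hL)]
    simp
  have h1 := sum_range_sin_odd_mul_pi_div odd_one hL
  have h3 := sum_range_sin_odd_mul_pi_div (by decide : Odd 3) hL
  simp only [Nat.cast_one, one_mul, Nat.cast_ofNat] at h1 h3
  have hterm (m : ℕ) : sin (m * π / L) ^ 3 =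
      3 / 4 * sin (m * (π / L)) - 1 / 4 * sin (m * (3 * π / L)) := by
    rw [sin_pow_three, mul_div_assoc, show 3 * (m * (π / L)) = m * (3 * π / L) by ring]
    ring
  rw [hrange, Finset.sum_congr rfl fun m _ => hterm m, Finset.sum_sub_distrib, ← Finset.mul_sum,
    ← Finset.mul_sum, h1, h3]
  ring

theorem cot_three_mul_sub_three_mul_cot (x : ℝ) (h : sin (3 * x) ≠ 0) :
    cot (3 * x) - 3 * cot x = -8 * cos x ^ 3 / sin (3 * x) := by
  have hfactor : sin (3 * x) = sin x * (3 - 4 * sin x ^ 2) := by rw [sin_three_mul]; ring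
  have hsin : sin x ≠ 0 := left_ne_zero_of_mul (hfactor ▸ h)
  rw [cot_eq_cos_div_sin, cot_eq_cos_div_sin, eq_div_iff h]
  calc (cos (3 * x) / sin (3 * x) - 3 * (cos x / sin x)) * sin (3 * x)
      = cos (3 * x) - 3 * cos x * (sin (3 * x) / sin x) := by field_simp
    _ = -8 * cos x ^ 3 := by
      rw [hfactor, mul_div_cancel_left₀ _ hsin, cos_three_mul]
      linear_combination 12 * cos x * sin_sq_add_cos_sq x

theorem abs_sin_three_mul_sub_mul_cos_pow_three_le {x : ℝ} (hx : |x| ≤ 1 / 3) :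
    |sin (3 * x) - 3 * x * cos x ^ 3| ≤ 6 * |x| ^ 5 := by
  have habs : |3 * x| = 3 * |x| := by simp [abs_mul]
  have h3x : |3 * x| ≤ 1 := by rw [habs]; linarith
  have hs := sin_bound h3x
  have hc := cos_bound (hx.trans (by norm_num))
  have hc3 := cos_bound h3x
  rw [habs] at hs hc3
  -- by `4 cos³ x = cos 3x + 3 cos x`, the degree-3 Taylor polynomials cancel exactly
  have hsplit : sin (3 * x) - 3 * x * cos x ^ 3 =
      (sin (3 * x) - (3 * x - (3 * x) ^ 3 / 6)) - 9 / 4 * x * (cos x - (1 - x ^ 2 / 2))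
        - 3 / 4 * x * (cos (3 * x) - (1 - (3 * x) ^ 2 / 2)) := by
    rw [cos_three_mul]; ring
  rw [hsplit]
  calc _ ≤ |sin (3 * x) - (3 * x - (3 * x) ^ 3 / 6)| + 9 / 4 * |x| * |cos x - (1 - x ^ 2 / 2)|
        + 3 / 4 * |x| * |cos (3 * x) - (1 - (3 * x) ^ 2 / 2)| := by
        refine (abs_sub _ _).trans (add_le_add ((abs_sub _ _).trans (le_of_eq ?_)) (le_of_eq ?_))
        all_goals simp only [abs_mul, abs_of_pos (by norm_num : (0 : ℝ) < 9 / 4),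
          abs_of_pos (by norm_num : (0 : ℝ) < 3 / 4)]
    _ ≤ (3 * |x|) ^ 5 / 100 + 9 / 4 * |x| * (|x| ^ 4 * (5 / 96))
        + 3 / 4 * |x| * ((3 * |x|) ^ 4 * (5 / 96)) := by gcongr
    _ ≤ 6 * |x| ^ 5 := by nlinarith [pow_nonneg (abs_nonneg x) 5]

theorem two_mul_le_sin_three_mul {x : ℝ} (hx0 : 0 < x) (hx : x ≤ 1 / 3) :
    2 * x ≤ sin (3 * x) := by
  have hsq : x ^ 2 ≤ 1 / 9 := by nlinarith
  nlinarith [sin_gt_sub_cube (by linarith : 0 < 3 * x), mul_le_mul_of_nonneg_left hsq hx0.le]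

theorem abs_half_cot_three_mul_sub_add_le {x : ℝ} (hx0 : 0 < x) (hx : x ≤ 1 / 3) :
    |1 / 2 * (cot (3 * x) - 3 * cot x) + 4 / (3 * x)| ≤ 4 * x ^ 3 := by
  have hsin := two_mul_le_sin_three_mul hx0 hx
  have hsin0 : 0 < sin (3 * x) := by linarith
  have hD := abs_sin_three_mul_sub_mul_cos_pow_three_le (x := x) (by rw [abs_of_pos hx0]; exact hx)
  rw [abs_of_pos hx0] at hD
  have heq : 1 / 2 * (cot (3 * x) - 3 * cot x) + 4 / (3 * x) =
      4 * (sin (3 * x) - 3 * x * cos x ^ 3) / (3 * x * sin (3 * x)) := by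
    rw [cot_three_mul_sub_three_mul_cot x hsin0.ne']
    field_simp
    ring
  rw [heq, abs_div, abs_mul, abs_of_pos (by positivity : (0 : ℝ) < 3 * x * sin (3 * x)),
    div_le_iff₀ (by positivity)]
  calc |(4 : ℝ)| * |sin (3 * x) - 3 * x * cos x ^ 3| ≤ 4 * (6 * x ^ 5) := by
        rw [abs_of_pos four_pos]; gcongr
    _ = 4 * x ^ 3 * (3 * x * (2 * x)) := by ring
    _ ≤ 4 * x ^ 3 * (3 * x * sin (3 * x)) := by gcongr

theorem abs_mul_half_cot_sub_add_le {N : ℝ} (hN : 3 * π ≤ N) :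
    |N * (1 / 2 * (cot (3 * π / N) - 3 * cot (π / N)) + 4 * N / (3 * π))| ≤
      4 * π ^ 3 / N ^ 2 := by
  have hN0 : 0 < N := by linarith [pi_pos]
  have hx0 : 0 < π / N := by positivity
  have hx : π / N ≤ 1 / 3 := by rw [div_le_iff₀ hN0]; linarith
  have h := abs_half_cot_three_mul_sub_add_le hx0 hx
  rw [← mul_div_assoc, show 4 / (3 * π / N) = 4 * N / (3 * π) by field_simp] at h
  rw [abs_mul, abs_of_pos hN0]
  calc N * _ ≤ N * (4 * (π / N) ^ 3) := by gcongr
    _ = 4 * π ^ 3 / N ^ 2 := by field_simp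

/-- **Vacuum value of the modified Hamiltonian `H[cos²]` and its asymptotics:**
for every `L ≥ 1`, `−2 Σ_{m=1}^{L−1} sin³(mπ/L) = (1/2)(cot(3π/N) − 3cot(π/N))`
with `N = 2L`, and `(1/2)(cot(3π/N) − 3cot(π/N)) = −4N/(3π) + o(1/N)` as
`N → ∞`, i.e. `N·((1/2)(cot(3π/N) − 3cot(π/N)) + 4N/(3π)) → 0` (the `N`-linear
contribution cancels in this combination). -/
theorem gl11_Hcos2_vacuum_value :
    (∀ L : ℕ, 1 ≤ L →
      -2 * ∑ m ∈ Finset.Ico 1 L, (Real.sin (m * Real.pi / L)) ^ 3 =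
        (1/2) * (Real.cot (3 * Real.pi / (2 * L)) - 3 * Real.cot (Real.pi / (2 * L)))) ∧
    Tendsto (fun N : ℝ =>
        N * ((1/2) * (Real.cot (3 * Real.pi / N) - 3 * Real.cot (Real.pi / N))
          + 4 * N / (3 * Real.pi)))
      atTop (nhds 0) := by
  refine ⟨fun L hL => neg_two_mul_sum_Ico_sin_pow_three L (Nat.one_le_iff_ne_zero.mp hL), ?_⟩
  refine squeeze_zero_norm' (a := fun N => 4 * π ^ 3 / N ^ 2) ?_ ?_
  · filter_upwards [eventually_ge_atTop (3 * π)] with N hN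
    exact abs_mul_half_cot_sub_add_le hN
  · exact tendsto_const_nhds.div_atTop (tendsto_pow_atTop two_ne_zero)
end

section
/- The lattice analogues of Kausch's sl(2) generators form sl(2) triples of symmetries of the Hamiltonian: for every odd integer n (positive or negative), [S^z, ẽ_n] = 2 ẽ_n, [S^z, f̃_n] = −2 f̃_n, [ẽ_n, f̃_n] = S^z, and both ẽ_n and f̃_n commute with the Hamiltonian: [ẽ_n, H] = 0 and [f̃_n, H] = 0. -/
/-!
All operators involved are quadratic in the fermions, and by the anticommutation relations the
bracket of a quadratic operator with a single `θ_q` or `θ_q†` is linear, so every bracket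
reduces through the Leibniz rule to a reindexed sum. The momenta enter only through
`sin(−p) = sin(p + π) = −sin p` and the oddness of `n`. In `[ẽ_n, H]` the term of `p` cancels
the term of `p + π`, their coefficients being `±(sin p)^n (1 + sin p)`; in `[ẽ_n, f̃_n]` the
pair `{p, −p}` contributes `(n_p + n_{−p} − 1)/2` because
`(sin p)^n ((sin p)^{−n} − (−sin p)^{−n}) = 2`, and these add up to `S^z`.
-/

open Finset Function

section

-- Mathlib keeps the commutator `LieRing` structure of a ring local; the final theorem, stated
-- with the plain ring bracket, therefore lies outside this section.
attribute [local instance] LieRing.ofAssociativeRing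

theorem Ring.mul_lie_eq_anticomm {A : Type*} [Ring A] (x y z : A) :
    ⁅x * y, z⁆ = x * (y * z + z * y) - (x * z + z * x) * y := by
  simp only [Ring.lie_def]; noncomm_ring

theorem Ring.lie_mul {A : Type*} [Ring A] (x y z : A) :
    ⁅x, y * z⁆ = ⁅x, y⁆ * z + y * ⁅x, z⁆ := by
  simp only [Ring.lie_def]; noncomm_ring

theorem lie_sub_smul_one {R A : Type*} [CommRing R] [Ring A] [Algebra R A] (x y : A) (r : R) :
    ⁅x - r • 1, y⁆ = ⁅x, y⁆ := by
  rw [sub_lie, smul_lie, (Commute.one_left y).lie_eq, smul_zero, sub_zero]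

structure IsCAR {I A : Type*} [DecidableEq I] [Ring A] (θ θd : I → A) : Prop where
  anticomm_annihilation : ∀ a b, θ a * θ b + θ b * θ a = 0
  anticomm_creation : ∀ a b, θd a * θd b + θd b * θd a = 0
  anticomm_mixed : ∀ a b, θ a * θd b + θd b * θ a = if a = b then 1 else 0

section Quadratic

variable {I R A : Type*} [Fintype I] [CommRing R] [Ring A] [Algebra R A]

def numberOperator (θ θd : I → A) : A := ∑ k, θd k * θ k

def hopping (θ θd : I → A) (c : I → R) (σ : I → I) : A :=
  ∑ k, c k • (θd k * θ (σ k))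

def pairCreation (θd : I → A) (e : I → R) (g : I → I) : A :=
  ∑ k, e k • (θd k * θd (g k))

def pairAnnihilation (θ : I → A) (f : I → R) (g : I → I) : A :=
  ∑ k, f k • (θ (g k) * θ k)

theorem numberOperator_eq_hopping (θ θd : I → A) :
    numberOperator θ θd = hopping θ θd (1 : I → R) id := by
  simp [numberOperator, hopping]

end Quadratic

namespace IsCAR

variable {I R A : Type*} [DecidableEq I] [Ring A] {θ θd : I → A}

theorem annihilation_mul_creation_self (hθ : IsCAR θ θd) (a : I) :
    θ a * θd a = 1 - θd a * θ a := by
  rw [eq_sub_iff_add_eq, hθ.anticomm_mixed, if_pos rfl]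

theorem lie_hop_creation (hθ : IsCAR θ θd) (k l a : I) :
    ⁅θd k * θ l, θd a⁆ = if l = a then θd k else 0 := by
  rw [Ring.mul_lie_eq_anticomm, hθ.anticomm_mixed, hθ.anticomm_creation]
  split_ifs <;> simp

theorem lie_hop_annihilation (hθ : IsCAR θ θd) (k l a : I) :
    ⁅θd k * θ l, θ a⁆ = -if a = k then θ l else 0 := by
  rw [Ring.mul_lie_eq_anticomm, hθ.anticomm_annihilation, add_comm, hθ.anticomm_mixed]
  split_ifs <;> simp

theorem lie_pair_annihilation (hθ : IsCAR θ θd) (a b c : I) :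
    ⁅θd a * θd b, θ c⁆ = (if c = b then θd a else 0) - if c = a then θd b else 0 := by
  rw [Ring.mul_lie_eq_anticomm, add_comm, hθ.anticomm_mixed, add_comm, hθ.anticomm_mixed]
  split_ifs <;> simp

variable [Fintype I] [CommRing R] [Algebra R A] {c e f : I → R} {σ g : I → I}

theorem lie_hopping_creation (hθ : IsCAR θ θd) (hσ : Involutive σ) (a : I) :
    ⁅hopping θ θd c σ, θd a⁆ = c (σ a) • θd (σ a) := by
  simp only [hopping, sum_lie, smul_lie, hθ.lie_hop_creation, hσ.eq_iff, smul_ite, smul_zero,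
    sum_ite_eq', mem_univ, if_true]

theorem lie_hopping_annihilation (hθ : IsCAR θ θd) (a : I) :
    ⁅hopping θ θd c σ, θ a⁆ = -(c a • θ (σ a)) := by
  simp only [hopping, sum_lie, smul_lie, hθ.lie_hop_annihilation, smul_neg, smul_ite, smul_zero,
    sum_neg_distrib, sum_ite_eq, mem_univ, if_true]

theorem lie_hopping_pairCreation (hθ : IsCAR θ θd) (hσ : Involutive σ) :
    ⁅hopping θ θd c σ, pairCreation θd e g⁆ = ∑ k, e k •
      (c (σ k) • (θd (σ k) * θd (g k)) + c (σ (g k)) • (θd k * θd (σ (g k)))) := by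
  simp only [pairCreation, lie_sum, LieAlgebra.lie_smul, Ring.lie_mul,
    hθ.lie_hopping_creation hσ, smul_mul_assoc, mul_smul_comm]

theorem lie_hopping_pairAnnihilation (hθ : IsCAR θ θd) :
    ⁅hopping θ θd c σ, pairAnnihilation θ f g⁆ = -∑ k, f k •
      (c (g k) • (θ (σ (g k)) * θ k) + c k • (θ (g k) * θ (σ k))) := by
  simp only [pairAnnihilation, lie_sum, LieAlgebra.lie_smul, Ring.lie_mul,
    hθ.lie_hopping_annihilation, neg_mul, mul_neg, smul_mul_assoc, mul_smul_comm, ← neg_add,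
    smul_neg, sum_neg_distrib]

theorem lie_numberOperator_pairCreation (hθ : IsCAR θ θd) :
    ⁅numberOperator θ θd, pairCreation θd e g⁆ = (2 : R) • pairCreation θd e g := by
  rw [numberOperator_eq_hopping (R := R), hθ.lie_hopping_pairCreation fun _ => rfl]
  simp only [pairCreation, id, Pi.one_apply, one_smul, ← two_smul R, smul_sum, smul_comm (2 : R)]

theorem lie_numberOperator_pairAnnihilation (hθ : IsCAR θ θd) :
    ⁅numberOperator θ θd, pairAnnihilation θ f g⁆ =
      (-2 : R) • pairAnnihilation θ f g := by
  rw [numberOperator_eq_hopping (R := R), hθ.lie_hopping_pairAnnihilation]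
  simp only [pairAnnihilation, id, Pi.one_apply, one_smul, ← two_smul R, smul_sum,
    smul_comm (2 : R), neg_smul, sum_neg_distrib]

theorem lie_hopping_pairCreation_eq_zero (hθ : IsCAR θ θd) (hσ : Involutive σ)
    (hgσ : ∀ k, g (σ k) = σ (g k)) (hc : ∀ k, e (σ k) * c k + e k * c (σ (g k)) = 0) :
    ⁅hopping θ θd c σ, pairCreation θd e g⁆ = 0 := by
  have hreindex : ∑ k, e k • c (σ k) • (θd (σ k) * θd (g k)) =
      ∑ k, e (σ k) • c k • (θd k * θd (σ (g k))) := by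
    rw [← Equiv.sum_comp (hσ.toPerm σ)]
    simp only [Involutive.coe_toPerm, hσ _, hgσ]
  rw [hθ.lie_hopping_pairCreation hσ]
  simp only [smul_add, sum_add_distrib]
  rw [hreindex, ← sum_add_distrib]
  simp only [smul_smul, ← add_smul, hc, zero_smul, sum_const_zero]

theorem lie_hopping_pairAnnihilation_eq_zero (hθ : IsCAR θ θd) (hσ : Involutive σ)
    (hgσ : ∀ k, g (σ k) = σ (g k)) (hc : ∀ k, f k * c (g k) + f (σ k) * c (σ k) = 0) :
    ⁅hopping θ θd c σ, pairAnnihilation θ f g⁆ = 0 := by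
  have hreindex : ∑ k, f k • c k • (θ (g k) * θ (σ k)) =
      ∑ k, f (σ k) • c (σ k) • (θ (σ (g k)) * θ k) := by
    rw [← Equiv.sum_comp (hσ.toPerm σ)]
    simp only [Involutive.coe_toPerm, hσ _, hgσ]
  rw [hθ.lie_hopping_pairAnnihilation]
  simp only [smul_add, sum_add_distrib]
  rw [hreindex, ← sum_add_distrib]
  simp only [smul_smul, ← add_smul, hc, zero_smul, sum_const_zero, neg_zero]

theorem lie_pair_pairAnnihilation (hθ : IsCAR θ θd) (hg : Involutive g) (m : I) :
    ⁅θd m * θd (g m), pairAnnihilation θ f g⁆ =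
      (f m - f (g m)) • (θd m * θ m + θd (g m) * θ (g m) - 1) := by
  simp only [pairAnnihilation, lie_sum, LieAlgebra.lie_smul, Ring.lie_mul,
    hθ.lie_pair_annihilation, hg.injective.eq_iff, hg.eq_iff, sub_mul, mul_sub, ite_mul, mul_ite,
    zero_mul, mul_zero, smul_add, smul_sub, smul_ite, smul_zero, sum_add_distrib, sum_sub_distrib,
    sum_ite_eq', mem_univ, if_true, hg m, hθ.annihilation_mul_creation_self]
  module

theorem lie_pairCreation_pairAnnihilation (hθ : IsCAR θ θd) (hg : Involutive g)
    (hef : ∀ m, e m * (f m - f (g m)) = 2) :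
    ⁅pairCreation θd e g, pairAnnihilation θ f g⁆ =
      (4 : R) • numberOperator θ θd - (2 * Fintype.card I : R) • 1 := by
  have hreindex : ∑ m, θd (g m) * θ (g m) = numberOperator θ θd :=
    Equiv.sum_comp (hg.toPerm g) (fun m => θd m * θ m)
  simp only [pairCreation, sum_lie, smul_lie, hθ.lie_pair_pairAnnihilation hg, smul_smul, hef,
    ← smul_sum, sum_sub_distrib, sum_add_distrib, hreindex, sum_const, card_univ]
  rw [← Nat.cast_smul_eq_nsmul R, numberOperator]
  module

end IsCAR

end

theorem Odd.zpow_mul_sub_neg_zpow_neg {K : Type*} [Field K] {n : ℤ} (hn : Odd n) {s : K}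
    (hs : s ≠ 0) : s ^ n * (s ^ (-n) - (-s) ^ (-n)) = 2 := by
  rw [hn.neg.neg_zpow, sub_neg_eq_add, ← two_mul, mul_left_comm, ← zpow_add₀ hs,
    add_neg_cancel, zpow_zero, mul_one]

section Momenta

variable {L : ℕ}

theorem eq_rev_of_val_eq_sub {n : ℕ} {r : Fin n → Fin n} (hr : ∀ m, (r m : ℕ) = n - 1 - m) :
    r = Fin.rev :=
  funext fun m => Fin.ext (by rw [hr, Fin.val_rev]; omega)

variable {shift : Fin (2 * L) → Fin (2 * L)} {p : Fin (2 * L) → ℝ}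

theorem val_halfTurn (hshift : ∀ m, (shift m : ℕ) = ((m : ℕ) + L) % (2 * L))
    (m : Fin (2 * L)) : (shift m : ℕ) = if (m : ℕ) < L then m + L else m - L := by
  have hm := m.isLt
  rw [hshift]
  split_ifs
  · exact Nat.mod_eq_of_lt (by omega)
  · rw [Nat.mod_eq_sub_mod (by omega), Nat.mod_eq_of_lt (by omega)]
    omega

theorem halfTurn_involutive (hshift : ∀ m, (shift m : ℕ) = ((m : ℕ) + L) % (2 * L)) :
    Involutive shift := fun m =>
  Fin.ext (by rw [val_halfTurn hshift, val_halfTurn hshift]; have := m.isLt; split_ifs <;> omega)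

theorem rev_halfTurn (hshift : ∀ m, (shift m : ℕ) = ((m : ℕ) + L) % (2 * L))
    (m : Fin (2 * L)) : Fin.rev (shift m) = shift (Fin.rev m) :=
  Fin.ext (by
    rw [Fin.val_rev, val_halfTurn hshift, val_halfTurn hshift, Fin.val_rev]
    have := m.isLt
    split_ifs <;> omega)

theorem sin_momentum_rev (hp : ∀ m, p m = (2 * ((m : ℕ) : ℝ) + 1) * Real.pi / (2 * L))
    (m : Fin (2 * L)) : Real.sin (p (Fin.rev m)) = -Real.sin (p m) := by
  have hm := m.isLt
  have hL : (L : ℝ) ≠ 0 := Nat.cast_ne_zero.2 (by omega)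
  have h : p (Fin.rev m) = 2 * Real.pi - p m := by
    rw [hp, hp, Fin.val_rev, Nat.cast_sub (by omega)]
    push_cast
    field_simp
    ring
  rw [h, Real.sin_two_pi_sub]

theorem sin_momentum_halfTurn (hp : ∀ m, p m = (2 * ((m : ℕ) : ℝ) + 1) * Real.pi / (2 * L))
    (hshift : ∀ m, (shift m : ℕ) = ((m : ℕ) + L) % (2 * L)) (m : Fin (2 * L)) :
    Real.sin (p (shift m)) = -Real.sin (p m) := by
  have hm := m.isLt
  have hL : (L : ℝ) ≠ 0 := Nat.cast_ne_zero.2 (by omega)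
  rw [hp, hp, val_halfTurn hshift]
  split_ifs
  · rw [← Real.sin_add_pi]
    congr 1
    push_cast
    field_simp
    ring
  · rw [← Real.sin_sub_pi, Nat.cast_sub (by omega)]
    congr 1
    field_simp
    ring

theorem sin_momentum_ne_zero (hp : ∀ m, p m = (2 * ((m : ℕ) : ℝ) + 1) * Real.pi / (2 * L))
    (m : Fin (2 * L)) : Real.sin (p m) ≠ 0 := by
  have hm := m.isLt
  have hL : (L : ℝ) ≠ 0 := Nat.cast_ne_zero.2 (by omega)
  rw [hp, Real.sin_ne_zero_iff]
  intro k hk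
  have hk_real : (k : ℝ) * (2 * L) = 2 * (m : ℕ) + 1 := by
    field_simp at hk
    linarith
  have hk_int : k * (2 * L) = 2 * ((m : ℕ) : ℤ) + 1 := by exact_mod_cast hk_real
  have : (2 : ℤ) ∣ 2 * ((m : ℕ) : ℤ) + 1 := ⟨k * L, by rw [← hk_int]; ring⟩
  omega

end Momenta

theorem lattice_kausch_sl2_symmetry_general
    (L : ℕ)
    (A : Type*) [Ring A] [Algebra ℂ A]
    (θ θd : Fin (2 * L) → A)
    -- canonical anticommutation relations
    (hθθ : ∀ m m', θ m * θ m' + θ m' * θ m = 0)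
    (hθdθd : ∀ m m', θd m * θd m' + θd m' * θd m = 0)
    (hθθd : ∀ m m', θ m * θd m' + θd m' * θ m = if m = m' then (1 : A) else 0)
    -- the momenta p_m = (2m−1)π/N
    (p : Fin (2 * L) → ℝ)
    (hp : ∀ m, p m = (2 * ((m : ℕ) : ℝ) + 1) * Real.pi / (2 * L))
    -- the index realising −p modulo 2π
    (neg : Fin (2 * L) → Fin (2 * L))
    (hneg : ∀ m, ((neg m : ℕ)) = 2 * L - 1 - (m : ℕ))
    -- the index realising p+π modulo 2π
    (shift : Fin (2 * L) → Fin (2 * L))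
    (hshift : ∀ m, ((shift m : ℕ)) = ((m : ℕ) + L) % (2 * L))
    (H Sz : A) (en fn : ℤ → A)
    (hH : H = (2 : ℂ) • ∑ m : Fin (2 * L),
      (((1 + Real.sin (p m)) : ℝ) : ℂ) • (θd m * θ (shift m)))
    (hSz : Sz = (∑ m : Fin (2 * L), θd m * θ m) - (L : ℂ) • (1 : A))
    (hen : ∀ n : ℤ, en n = ((1 : ℂ)/2) • ∑ m : Fin (2 * L),
      (((Real.sin (p m)) ^ n : ℝ) : ℂ) • (θd m * θd (neg m)))
    (hfn : ∀ n : ℤ, fn n = ((1 : ℂ)/2) • ∑ m : Fin (2 * L),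
      (((Real.sin (p m)) ^ (-n) : ℝ) : ℂ) • (θ (neg m) * θ m)) :
    ∀ n : ℤ, Odd n →
      ⁅Sz, en n⁆ = (2 : ℂ) • en n ∧
      ⁅Sz, fn n⁆ = (-2 : ℂ) • fn n ∧
      ⁅en n, fn n⁆ = Sz ∧
      ⁅en n, H⁆ = 0 ∧
      ⁅fn n, H⁆ = 0 := by
  let _ : LieRing A := LieRing.ofAssociativeRing
  intro n hn
  obtain rfl : neg = Fin.rev := eq_rev_of_val_eq_sub hneg
  have hθ : IsCAR θ θd := ⟨hθθ, hθdθd, hθθd⟩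
  have hsrev := sin_momentum_rev hp
  have hsσ := sin_momentum_halfTurn hp hshift
  have hen' : en n = (1 / 2 : ℂ) •
      pairCreation θd (fun m => ((Real.sin (p m) ^ n : ℝ) : ℂ)) Fin.rev := hen n
  have hfn' : fn n = (1 / 2 : ℂ) •
      pairAnnihilation θ (fun m => ((Real.sin (p m) ^ (-n) : ℝ) : ℂ)) Fin.rev := hfn n
  have hH' : H = (2 : ℂ) •
      hopping θ θd (fun m => ((1 + Real.sin (p m) : ℝ) : ℂ)) shift := hH
  have hSz' : Sz = numberOperator θ θd - (L : ℂ) • 1 := hSz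
  refine ⟨?_, ?_, ?_, ?_, ?_⟩
  · rw [hSz', lie_sub_smul_one, hen', LieAlgebra.lie_smul, hθ.lie_numberOperator_pairCreation,
      smul_comm]
  · rw [hSz', lie_sub_smul_one, hfn', LieAlgebra.lie_smul,
      hθ.lie_numberOperator_pairAnnihilation, smul_comm]
  · rw [hen', hfn', smul_lie, LieAlgebra.lie_smul,
      hθ.lie_pairCreation_pairAnnihilation Fin.rev_involutive fun m => ?_, hSz', Fintype.card_fin]
    · push_cast
      module
    · rw [hsrev]
      exact_mod_cast hn.zpow_mul_sub_neg_zpow_neg (sin_momentum_ne_zero hp m)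
  · rw [hen', hH', ← lie_skew, smul_lie, LieAlgebra.lie_smul,
      hθ.lie_hopping_pairCreation_eq_zero (halfTurn_involutive hshift) (rev_halfTurn hshift)
        fun m => ?_, smul_zero, smul_zero, neg_zero]
    simp only [hsrev, hsσ, hn.neg_zpow]
    push_cast
    ring
  · rw [hfn', hH', ← lie_skew, smul_lie, LieAlgebra.lie_smul,
      hθ.lie_hopping_pairAnnihilation_eq_zero (halfTurn_involutive hshift) (rev_halfTurn hshift)
        fun m => ?_, smul_zero, smul_zero, neg_zero]
    simp only [hsrev, hsσ, hn.neg.neg_zpow]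
    push_cast
    ring

/-- **Lattice analogues of Kausch's sl(2) generators are symmetries of the
Hamiltonian:** for the antiperiodic momenta `p_m = (2m−1)π/N` (`N = 2L`,
labelled by `m : Fin N ↦ m+1`, with `−p` and `p+π` taken modulo 2π inside the
set of momenta), the operators `ẽ_n := (1/2)Σ_p (sin p)^n θ_p† θ_{−p}†` and
`f̃_n := (1/2)Σ_p (sin p)^{−n} θ_{−p} θ_p`, for every odd integer `n`, satisfy
`[S^z, ẽ_n] = 2ẽ_n`, `[S^z, f̃_n] = −2f̃_n`, `[ẽ_n, f̃_n] = S^z`, and commute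
with `H := 2 Σ_p (1 + sin p) θ_p† θ_{p+π}`, where
`S^z := Σ_p θ_p† θ_p − L·1`. -/
theorem lattice_kausch_sl2_symmetry
    (L : ℕ) (hL : 0 < L)
    (A : Type*) [Ring A] [Algebra ℂ A]
    (θ θd : Fin (2 * L) → A)
    -- canonical anticommutation relations
    (hθθ : ∀ m m', θ m * θ m' + θ m' * θ m = 0)
    (hθdθd : ∀ m m', θd m * θd m' + θd m' * θd m = 0)
    (hθθd : ∀ m m', θ m * θd m' + θd m' * θ m = if m = m' then (1 : A) else 0)
    -- the momenta p_m = (2m−1)π/N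
    (p : Fin (2 * L) → ℝ)
    (hp : ∀ m, p m = (2 * ((m : ℕ) : ℝ) + 1) * Real.pi / (2 * L))
    -- the index realising −p modulo 2π
    (neg : Fin (2 * L) → Fin (2 * L))
    (hneg : ∀ m, ((neg m : ℕ)) = 2 * L - 1 - (m : ℕ))
    -- the index realising p+π modulo 2π
    (shift : Fin (2 * L) → Fin (2 * L))
    (hshift : ∀ m, ((shift m : ℕ)) = ((m : ℕ) + L) % (2 * L))
    (H Sz : A) (en fn : ℤ → A)
    (hH : H = (2 : ℂ) • ∑ m : Fin (2 * L),
      (((1 + Real.sin (p m)) : ℝ) : ℂ) • (θd m * θ (shift m)))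
    (hSz : Sz = (∑ m : Fin (2 * L), θd m * θ m) - (L : ℂ) • (1 : A))
    (hen : ∀ n : ℤ, en n = ((1 : ℂ)/2) • ∑ m : Fin (2 * L),
      (((Real.sin (p m)) ^ n : ℝ) : ℂ) • (θd m * θd (neg m)))
    (hfn : ∀ n : ℤ, fn n = ((1 : ℂ)/2) • ∑ m : Fin (2 * L),
      (((Real.sin (p m)) ^ (-n) : ℝ) : ℂ) • (θ (neg m) * θ m)) :
    ∀ n : ℤ, Odd n →
      ⁅Sz, en n⁆ = (2 : ℂ) • en n ∧
      ⁅Sz, fn n⁆ = (-2 : ℂ) • fn n ∧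
      ⁅en n, fn n⁆ = Sz ∧
      ⁅en n, H⁆ = 0 ∧
      ⁅fn n, H⁆ = 0 :=
  lattice_kausch_sl2_symmetry_general L A θ θd hθθ hθdθd hθθd p hp neg hneg shift hshift H Sz en fn
    hH hSz hen hfn
end
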